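/- arXiv:2405.11947 — 9 statements merged into one kernel-verified Lean document; each statement's English description precedes it below -/
import Mathlib

section
/- Let n ≥ 2 and let α, β, γ, δ be real numbers with γ ≠ δ. Then the limit of (P_α(x₁,...,xₙ) - P_β(x₁,...,xₙ)) / (P_γ(x₁,...,xₙ) - P_δ(x₁,...,xₙ)) as (x₁,...,xₙ) → (x,x,...,x) equals (α-β)/(γ-δ), for any fixed x > 0. -/
/-!
Put `d i = log vᵢ - (∑ⱼ log vⱼ) / n`, so that `∑ d i = 0` and
`P_s(v) = G(v) * ((∑ exp (s * d i)) / n) ^ (1 / s)`; for `s = 0` this holds because `1 / 0 = 0`.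
Expanding `exp (s * d i)` to second order, the centring kills the linear term, so with
`Q = ∑ (d i)²` the mean of the `exp (s * d i)` is `1 + s² Q / (2n) + o(Q)`, and taking the
`1/s`-th power gives `P_s / G = 1 + s Q / (2n) + o(Q)` as `v` tends to the diagonal.
In the quotient the factor `G` and the scale `Q / (2n)` cancel, leaving `(α - β) / (γ - δ)`;
`Q > 0` exactly when the `vᵢ` are not all equal.
-/

open Filter Topology Asymptotics Real

/-- Power mean of exponent `α` (geometric mean when `α = 0`). -/
noncomputable def pmean {n : ℕ} (α : ℝ) (x : Fin n → ℝ) : ℝ :=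
  if α = 0 then (∏ i, x i) ^ ((1 : ℝ) / n)
  else ((∑ i, x i ^ α) / n) ^ (1 / α)

section Asymptotics

variable {X : Type*} {l : Filter X}

theorem HasDerivAt.isLittleO_comp_of_isBigO {f : ℝ → ℝ} {f' a : ℝ} (hf : HasDerivAt f f' a)
    {u w : X → ℝ} (hu : Tendsto u l (𝓝 a))
    (huw : (fun x => u x - a) =O[l] w) :
    (fun x => f (u x) - f a - f' * (u x - a)) =o[l] w := by
  have h := ((hasDerivAt_iff_isLittleO.mp hf).comp_tendsto hu).trans_isBigO huw
  simpa only [Function.comp_def, smul_eq_mul, mul_comm] using h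

theorem tendsto_div_of_isLittleO_sub_mul {f w : X → ℝ} {a : ℝ}
    (hf : (fun x => f x - a * w x) =o[l] w) (hw : ∀ᶠ x in l, w x ≠ 0) :
    Tendsto (fun x => f x / w x) l (𝓝 a) := by
  have h := hf.tendsto_div_nhds_zero.add_const a
  rw [zero_add] at h
  refine h.congr' ?_
  filter_upwards [hw] with x hx
  field_simp
  ring

theorem tendsto_sub_div_sub_of_isLittleO {φ : ℝ → X → ℝ} {w : X → ℝ} {c : ℝ}
    (hφ : ∀ s, (fun x => φ s x - 1 - s / c * w x) =o[l] w) (hw : ∀ᶠ x in l, w x ≠ 0)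
    (hc : c ≠ 0) {α β γ δ : ℝ} (hγδ : γ ≠ δ) :
    Tendsto (fun x => (φ α x - φ β x) / (φ γ x - φ δ x)) l (𝓝 ((α - β) / (γ - δ))) := by
  have hdiff : ∀ s t, Tendsto (fun x => (φ s x - φ t x) / w x) l (𝓝 ((s - t) / c)) :=
    fun s t => tendsto_div_of_isLittleO_sub_mul
      (((hφ s).sub (hφ t)).congr_left fun x => by ring) hw
  have hlim := (hdiff α β).div (hdiff γ δ) (div_ne_zero (sub_ne_zero.mpr hγδ) hc)
  rw [div_div_div_cancel_right₀ hc] at hlim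
  refine hlim.congr' ?_
  filter_upwards [hw] with x hx
  exact div_div_div_cancel_right₀ hx _ _

variable {ι : Type*} [Fintype ι] {d : ι → X → ℝ}

theorem isLittleO_sum_exp_mul_sub (hd : ∀ i, Tendsto (d i) l (𝓝 0))
    (hsum : ∀ x, ∑ i, d i x = 0) (s : ℝ) :
    (fun x => ∑ i, exp (s * d i x) - (Fintype.card ι + s ^ 2 / 2 * ∑ i, d i x ^ 2))
      =o[l] fun x => ∑ i, d i x ^ 2 := by
  have hterm : ∀ i, (fun x => exp (s * d i x) - ∑ k ∈ Finset.range 3, (s * d i x) ^ k / k.factorial)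
      =o[l] fun x => ∑ i, d i x ^ 2 := by
    intro i
    have hsd : Tendsto (fun x => s * d i x) l (𝓝 0) := by simpa using (hd i).const_mul s
    refine ((exp_sub_sum_range_succ_isLittleO_pow 2).comp_tendsto hsd).trans_isBigO ?_
    refine IsBigO.of_bound (s ^ 2) (Eventually.of_forall fun x => ?_)
    have hle : d i x ^ 2 ≤ ∑ j, d j x ^ 2 :=
      Finset.single_le_sum (fun j _ => sq_nonneg (d j x)) (Finset.mem_univ i)
    simp only [Function.comp_apply, norm_pow, norm_mul, Real.norm_eq_abs,
      abs_of_nonneg (Finset.sum_nonneg fun j _ => sq_nonneg (d j x))]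
    rw [mul_pow, sq_abs, sq_abs]
    exact mul_le_mul_of_nonneg_left hle (sq_nonneg s)
  refine (IsLittleO.fun_sum (s := Finset.univ) fun i _ => hterm i).congr_left fun x => ?_
  have htaylor : ∑ i, ∑ k ∈ Finset.range 3, (s * d i x) ^ k / (k.factorial : ℝ)
      = Fintype.card ι + s * ∑ i, d i x + s ^ 2 / 2 * ∑ i, d i x ^ 2 := by
    simp only [Finset.sum_range_succ, Finset.sum_range_zero, Finset.sum_add_distrib,
      Finset.mul_sum]
    norm_num [Nat.factorial]
    exact Finset.sum_congr rfl fun i _ => by ring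
  rw [Finset.sum_sub_distrib, htaylor, hsum, mul_zero, add_zero]

theorem tendsto_sum_sq (hd : ∀ i, Tendsto (d i) l (𝓝 0)) :
    Tendsto (fun x => ∑ i, d i x ^ 2) l (𝓝 0) := by
  simpa using tendsto_finsetSum Finset.univ fun i _ => (hd i).pow 2

theorem isLittleO_mean_exp_mul_rpow_sub [Nonempty ι] (hd : ∀ i, Tendsto (d i) l (𝓝 0))
    (hsum : ∀ x, ∑ i, d i x = 0) (s : ℝ) :
    (fun x => ((∑ i, exp (s * d i x)) / Fintype.card ι) ^ (1 / s) - 1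
      - s / (2 * Fintype.card ι) * ∑ i, d i x ^ 2) =o[l] fun x => ∑ i, d i x ^ 2 := by
  set n : ℝ := (Fintype.card ι : ℝ)
  have hn : n ≠ 0 := Nat.cast_ne_zero.mpr Fintype.card_ne_zero
  set Q := fun x => ∑ i, d i x ^ 2
  set m := fun x => (∑ i, exp (s * d i x)) / n
  have hm : (fun x => m x - 1 - s ^ 2 / (2 * n) * Q x) =o[l] Q :=
    ((isLittleO_sum_exp_mul_sub hd hsum s).const_mul_left n⁻¹).congr_left fun x => by
      simp only [m, Q]; field_simp; ring
  have hmO : (fun x => m x - 1) =O[l] Q :=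
    (hm.isBigO.add (isBigO_const_mul_self (s ^ 2 / (2 * n)) Q l)).congr_left fun x => by ring
  have hm1 : Tendsto m l (𝓝 1) := by
    simpa using (hmO.trans_tendsto (tendsto_sum_sq hd)).add_const 1
  have hrpow : HasDerivAt (fun y : ℝ => y ^ (1 / s)) (1 / s) 1 := by
    simpa using hasDerivAt_rpow_const (p := 1 / s) (Or.inl one_ne_zero)
  have hs : 1 / s * s ^ 2 = s := by
    rcases eq_or_ne s 0 with rfl | hs0
    · simp
    · field_simp
  refine ((hrpow.isLittleO_comp_of_isBigO hm1 hmO).add (hm.const_mul_left (1 / s))).congr_left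
    fun x => ?_
  simp only [Real.one_rpow]
  linear_combination -(Q x / (2 * n)) * hs

end Asymptotics

section PowerMean

variable {n : ℕ}

noncomputable def logDev (v : Fin n → ℝ) (i : Fin n) : ℝ := log (v i) - (∑ j, log (v j)) / n

theorem sum_logDev (hn : n ≠ 0) (v : Fin n → ℝ) : ∑ i, logDev v i = 0 := by
  simp only [logDev, Finset.sum_sub_distrib, Finset.sum_const, Finset.card_univ,
    Fintype.card_fin, nsmul_eq_mul]
  field_simp
  ring

theorem pmean_zero_eq_exp {v : Fin n → ℝ} (hv : ∀ i, 0 < v i) :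
    pmean 0 v = exp ((∑ i, log (v i)) / n) := by
  rw [pmean, if_pos rfl, rpow_def_of_pos (Finset.prod_pos fun i _ => hv i),
    log_prod fun i _ => (hv i).ne']
  ring_nf

theorem pmean_eq_pmean_zero_mul (hn : n ≠ 0) {v : Fin n → ℝ} (hv : ∀ i, 0 < v i) (s : ℝ) :
    pmean s v = pmean 0 v * ((∑ i, exp (s * logDev v i)) / n) ^ (1 / s) := by
  rcases eq_or_ne s 0 with rfl | hs
  · simp [hn]
  have hexp : ∀ i, v i ^ s = exp (s * ((∑ j, log (v j)) / n)) * exp (s * logDev v i) := fun i => by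
    rw [rpow_def_of_pos (hv i), ← exp_add, logDev]
    ring_nf
  rw [pmean, if_neg hs, pmean_zero_eq_exp hv, Finset.sum_congr rfl fun i _ => hexp i,
    ← Finset.mul_sum, mul_div_assoc, mul_rpow (exp_pos _).le (by positivity), ← exp_mul]
  field_simp

theorem tendsto_logDev (hn : n ≠ 0) {x : ℝ} (hx : 0 < x) (i : Fin n) :
    Tendsto (fun v => logDev v i) (𝓝 fun _ => x) (𝓝 0) := by
  have hlog : ∀ j, Tendsto (fun v : Fin n → ℝ => log (v j)) (𝓝 fun _ => x) (𝓝 (log x)) :=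
    fun j => ((continuous_apply j).continuousAt.log hx.ne').tendsto
  simpa [logDev, hn] using
    (hlog i).sub ((tendsto_finsetSum Finset.univ fun j _ => hlog j).div_const n)

theorem sum_logDev_sq_pos {v : Fin n → ℝ} (hv : ∀ i, 0 < v i) (hne : ¬ ∀ i j, v i = v j) :
    0 < ∑ i, logDev v i ^ 2 := by
  refine (Finset.sum_nonneg fun i _ => sq_nonneg _).lt_of_ne fun h => hne fun i j => ?_
  have hzero : ∀ i, log (v i) = (∑ j, log (v j)) / n := fun i => by
    have := (Finset.sum_eq_zero_iff_of_nonneg fun i _ => sq_nonneg (logDev v i)).mp h.symm i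
      (Finset.mem_univ i)
    rwa [logDev, sq_eq_zero_iff, sub_eq_zero] at this
  exact log_injOn_pos (hv i) (hv j) ((hzero i).trans (hzero j).symm)

end PowerMean

theorem stmt_0 (n : ℕ) (hn : 2 ≤ n) (α β γ δ : ℝ) (hγδ : γ ≠ δ)
    (x : ℝ) (hx : 0 < x) :
    Tendsto (fun v : Fin n → ℝ => (pmean α v - pmean β v) / (pmean γ v - pmean δ v))
      (nhdsWithin (fun _ => x)
        {v : Fin n → ℝ | (∀ i, 0 < v i) ∧ ¬ (∀ i j, v i = v j)})
      (nhds ((α - β) / (γ - δ))) := by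
  have hn0 : n ≠ 0 := by omega
  have : Nonempty (Fin n) := ⟨⟨0, by omega⟩⟩
  set S := {v : Fin n → ℝ | (∀ i, 0 < v i) ∧ ¬ (∀ i j, v i = v j)}
  have hmem : S ∈ 𝓝[S] fun _ => x := self_mem_nhdsWithin
  have hd : ∀ i, Tendsto (fun v => logDev v i) (𝓝[S] fun _ => x) (𝓝 0) :=
    fun i => (tendsto_logDev hn0 hx i).mono_left nhdsWithin_le_nhds
  have hφ := isLittleO_mean_exp_mul_rpow_sub (d := fun i v => logDev v i) hd (sum_logDev hn0)
  have hpos : ∀ᶠ v in 𝓝[S] fun _ => x, ∑ i, logDev v i ^ 2 ≠ 0 := by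
    filter_upwards [hmem] with v hv using (sum_logDev_sq_pos hv.1 hv.2).ne'
  refine (tendsto_sub_div_sub_of_isLittleO (φ := fun s v =>
    ((∑ i, exp (s * logDev v i)) / n) ^ (1 / s)) (by simpa using hφ) hpos
    (by positivity) hγδ).congr' ?_
  filter_upwards [hmem] with v hv
  rw [pmean_eq_pmean_zero_mul hn0 hv.1 α, pmean_eq_pmean_zero_mul hn0 hv.1 β,
    pmean_eq_pmean_zero_mul hn0 hv.1 γ, pmean_eq_pmean_zero_mul hn0 hv.1 δ, ← mul_sub, ← mul_sub]
  exact (mul_div_mul_left _ _ (pmean_zero_eq_exp hv.1 ▸ exp_ne_zero _)).symm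
end

section
/- Under the constraints x ≤ y ≤ z, xyz = α, x + y + z = β (α, β > 0, β³ > 27α), if r > 1 then the function h(x,y,z) = x^r + y^r + z^r attains its maximum when x = y < z and its minimum when x < y = z. -/
/-!
Parametrize the arc by its smallest coordinate `x`: the other two coordinates are the roots
`y ≤ z` of `t² - (b - x) t + a / x`, and `x` runs over an interval `[x₁, x₂]` with `y = z` at `x₁`
and `x = y` at `x₂`; these are the roots in `(0, b / 3)` of `x (b - x)² = 4 a` and
`x² (b - 2 x) = a`, whose left sides increase on `[0, b / 3]`. Along the arc `(x', y', z')` is proportional to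
`(x (z - y), y (x - z), z (y - x))`, so the derivative of `x ^ r + y ^ r + z ^ r` in `x` has the
sign of `(z - y) x ^ r + (y - x) z ^ r - (z - x) y ^ r`, which is nonnegative by convexity of
`t ↦ t ^ r`. Hence the power sum increases with `x`.
-/

open Set

noncomputable section

namespace SymmetricCurve

def disc (a b x : ℝ) : ℝ := (b - x) ^ 2 - 4 * a / x

def midCoord (a b x : ℝ) : ℝ := (b - x - √(disc a b x)) / 2

def topCoord (a b x : ℝ) : ℝ := (b - x + √(disc a b x)) / 2

def powerSum (a b r x : ℝ) : ℝ := x ^ r + midCoord a b x ^ r + topCoord a b x ^ r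

variable {a b x : ℝ}

lemma topCoord_sub_midCoord : topCoord a b x - midCoord a b x = √(disc a b x) := by
  unfold midCoord topCoord; ring

lemma midCoord_eq_and_topCoord_eq {y z : ℝ} (hx : 0 < x) (hyz : y ≤ z)
    (hprod : x * y * z = a) (hsum : x + y + z = b) :
    midCoord a b x = y ∧ topCoord a b x = z := by
  have hdisc : disc a b x = (z - y) ^ 2 := by
    rw [disc, ← hprod, ← hsum]; field_simp; ring
  have hsqrt : √(disc a b x) = z - y := by rw [hdisc, Real.sqrt_sq (by linarith)]
  constructor
  · rw [midCoord, hsqrt, ← hsum]; ring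
  · rw [topCoord, hsqrt, ← hsum]; ring

lemma disc_pos (hx : 0 < x) (h : 4 * a < x * (b - x) ^ 2) : 0 < disc a b x := by
  rw [disc, sub_pos, div_lt_iff₀ hx]; linarith

lemma lt_midCoord (hx : 0 < x) (hxb : 3 * x < b) (h : x ^ 2 * (b - 2 * x) < a) :
    x < midCoord a b x := by
  have hdisc : disc a b x < (b - 3 * x) ^ 2 := by
    rw [disc, sub_lt_iff_lt_add, ← sub_lt_iff_lt_add', lt_div_iff₀ hx]; nlinarith
  have hsqrt := (Real.sqrt_lt' (by linarith)).2 hdisc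
  rw [midCoord]; linarith

lemma hasDerivAt_disc (hx : x ≠ 0) :
    HasDerivAt (disc a b) (-2 * (b - x) + 4 * a / x ^ 2) x := by
  have := (((hasDerivAt_id' x).const_sub b).fun_pow 2).sub
    ((hasDerivAt_inv hx).const_mul (4 * a))
  simp only [← div_eq_mul_inv] at this
  exact this.congr_deriv (by field_simp; ring)

lemma hasDerivAt_midCoord (hx : 0 < x) (hD : 0 < disc a b x) :
    HasDerivAt (midCoord a b)
      (midCoord a b x * (x - topCoord a b x) / (x * (topCoord a b x - midCoord a b x))) x := by
  have := (((hasDerivAt_id' x).const_sub b).sub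
    ((hasDerivAt_disc hx.ne').sqrt hD.ne')).div_const 2
  refine this.congr_deriv ?_
  rw [topCoord_sub_midCoord]
  unfold midCoord topCoord
  have hs := Real.sq_sqrt hD.le
  have hx0 := hx.ne'
  generalize √(disc a b x) = s at hs ⊢
  have hs0 : s ≠ 0 := by rintro rfl; rw [← hs] at hD; simp at hD
  rw [disc] at hs
  field_simp
  field_simp at hs
  linear_combination (-1) * hs

lemma hasDerivAt_topCoord (hx : 0 < x) (hD : 0 < disc a b x) :
    HasDerivAt (topCoord a b)
      (topCoord a b x * (midCoord a b x - x) / (x * (topCoord a b x - midCoord a b x))) x := by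
  have hyz : topCoord a b x - midCoord a b x ≠ 0 := by
    rw [topCoord_sub_midCoord]; exact (Real.sqrt_pos.2 hD).ne'
  have htop : (fun t => b - t) - midCoord a b = topCoord a b := by
    ext t; simp only [Pi.sub_apply]; unfold midCoord topCoord; ring
  have := ((hasDerivAt_id' x).const_sub b).sub (hasDerivAt_midCoord hx hD)
  rw [htop] at this
  refine this.congr_deriv ?_
  field_simp
  ring

lemma continuousOn_powerSum {r : ℝ} (hr : 0 ≤ r) : ContinuousOn (powerSum a b r) (Ioi 0) := by
  have hD : ContinuousOn (disc a b) (Ioi 0) := by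
    unfold disc
    exact ContinuousOn.sub (by fun_prop) (continuousOn_const.div continuousOn_id fun t ht => ht.ne')
  unfold powerSum midCoord topCoord
  fun_prop (disch := exact hr)

lemma exists_hasDerivAt_powerSum_nonneg {r : ℝ} (hr : 1 ≤ r) (hx : 0 < x) (hD : 0 < disc a b x)
    (hxy : x < midCoord a b x) : ∃ g', HasDerivAt (powerSum a b r) g' x ∧ 0 ≤ g' := by
  have hyz : midCoord a b x < topCoord a b x := by
    rw [← sub_pos, topCoord_sub_midCoord]; exact Real.sqrt_pos.2 hD
  set y := midCoord a b x
  set z := topCoord a b x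
  have hy : 0 < y := hx.trans hxy
  have hz : 0 < z := hy.trans hyz
  refine ⟨_, ((Real.hasDerivAt_rpow_const (Or.inl hx.ne')).add
    ((hasDerivAt_midCoord hx hD).rpow_const (Or.inl hy.ne'))).add
    ((hasDerivAt_topCoord hx hD).rpow_const (Or.inl hz.ne')), ?_⟩
  have hconv := (convexOn_rpow hr).secant_mono_aux1 hx.le hz.le hxy hyz
  rw [Real.rpow_sub_one hx.ne', Real.rpow_sub_one hy.ne', Real.rpow_sub_one hz.ne']
  have hzy : z - y ≠ 0 := (sub_pos.2 hyz).ne'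
  have hderiv : r * (x ^ r / x) + y * (x - z) / (x * (z - y)) * r * (y ^ r / y)
      + z * (y - x) / (x * (z - y)) * r * (z ^ r / z)
      = r / (x * (z - y)) * ((z - y) * x ^ r + (y - x) * z ^ r - (z - x) * y ^ r) := by
    field_simp
    ring
  rw [hderiv]
  exact mul_nonneg (div_nonneg (by linarith) (mul_pos hx (sub_pos.2 hyz)).le) (by linarith)

lemma strictMonoOn_mul_sub_sq (b : ℝ) :
    StrictMonoOn (fun x : ℝ => x * (b - x) ^ 2) (Icc 0 (b / 3)) := by
  intro x hx y hy hxy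
  have hfactor : 0 < b ^ 2 - 2 * b * (x + y) + x ^ 2 + x * y + y ^ 2 := by
    nlinarith [hx.1, hy.2, mul_nonneg (sub_nonneg.2 hy.2) (by linarith [hx.1] : 0 ≤ 2 * y - x),
      mul_pos (by linarith [hx.1] : 0 < 4 * y - x) (sub_pos.2 hxy)]
  show x * (b - x) ^ 2 < y * (b - y) ^ 2
  nlinarith [mul_pos (sub_pos.2 hxy) hfactor]

lemma strictMonoOn_sq_mul_sub (b : ℝ) :
    StrictMonoOn (fun x : ℝ => x ^ 2 * (b - 2 * x)) (Icc 0 (b / 3)) := by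
  intro x hx y hy hxy
  have hfactor : 0 < b * (x + y) - 2 * (x ^ 2 + x * y + y ^ 2) := by
    nlinarith [hx.1, hy.2, mul_nonneg (sub_nonneg.2 hy.2) (by linarith [hx.1] : 0 ≤ x + y),
      mul_pos (by linarith [hx.1] : 0 < y + 2 * x) (sub_pos.2 hxy)]
  show x ^ 2 * (b - 2 * x) < y ^ 2 * (b - 2 * y)
  nlinarith [mul_pos (sub_pos.2 hxy) hfactor]


lemma monotoneOn_powerSum {r x₁ x₂ : ℝ} (hr : 1 ≤ r) (hx₁ : 0 < x₁) (hx₂ : x₂ ≤ b / 3)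
    (h₁ : 4 * a ≤ x₁ * (b - x₁) ^ 2) (h₂ : x₂ ^ 2 * (b - 2 * x₂) ≤ a) :
    MonotoneOn (powerSum a b r) (Icc x₁ x₂) := by
  have hderiv : ∀ x ∈ Ioo x₁ x₂, ∃ g', HasDerivAt (powerSum a b r) g' x ∧ 0 ≤ g' := by
    intro x hx
    have hx0 : 0 < x := hx₁.trans hx.1
    have hxI : x ∈ Icc 0 (b / 3) := ⟨hx0.le, hx.2.le.trans hx₂⟩
    have hδ := strictMonoOn_mul_sub_sq b ⟨hx₁.le, hx.1.le.trans hxI.2⟩ hxI hx.1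
    have hφ := strictMonoOn_sq_mul_sub b hxI ⟨hx0.le.trans hx.2.le, hx₂⟩ hx.2
    exact exists_hasDerivAt_powerSum_nonneg hr hx0 (disc_pos hx0 (h₁.trans_lt hδ))
      (lt_midCoord hx0 (by linarith [hx.2]) (hφ.trans_le h₂))
  rw [← interior_Icc] at hderiv
  refine monotoneOn_of_deriv_nonneg (convex_Icc x₁ x₂)
    ((continuousOn_powerSum (by linarith)).mono fun x hx => hx₁.trans_le hx.1)
    (fun x hx => (hderiv x hx).choose_spec.1.differentiableAt.differentiableWithinAt)
    fun x hx => ?_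
  obtain ⟨g', hg', hg'0⟩ := hderiv x hx
  rwa [hg'.deriv]

def feasibleSet (a b : ℝ) : Set (ℝ × ℝ × ℝ) :=
  {p | 0 < p.1 ∧ p.1 ≤ p.2.1 ∧ p.2.1 ≤ p.2.2 ∧ p.1 * p.2.1 * p.2.2 = a ∧ p.1 + p.2.1 + p.2.2 = b}

lemma powerSum_eq_of_mem_feasibleSet {p : ℝ × ℝ × ℝ} (hp : p ∈ feasibleSet a b) (r : ℝ) :
    powerSum a b r p.1 = p.1 ^ r + p.2.1 ^ r + p.2.2 ^ r := by
  obtain ⟨hx, -, hyz, hprod, hsum⟩ := hp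
  obtain ⟨hy, hz⟩ := midCoord_eq_and_topCoord_eq hx hyz hprod hsum
  rw [powerSum, hy, hz]

lemma fst_mem_Icc_of_mem_feasibleSet {x₁ x₂ : ℝ} (hx₁ : x₁ ∈ Icc 0 (b / 3))
    (h₁ : x₁ * (b - x₁) ^ 2 = 4 * a) (hx₂ : x₂ ∈ Icc 0 (b / 3)) (h₂ : x₂ ^ 2 * (b - 2 * x₂) = a)
    {p : ℝ × ℝ × ℝ} (hp : p ∈ feasibleSet a b) : p.1 ∈ Icc x₁ x₂ := by
  obtain ⟨hx, hxy, hyz, hprod, hsum⟩ := hp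
  have hpI : p.1 ∈ Icc 0 (b / 3) := ⟨hx.le, by linarith⟩
  constructor
  · rw [← (strictMonoOn_mul_sub_sq b).le_iff_le hx₁ hpI, h₁, ← hprod, ← hsum]
    nlinarith [mul_nonneg hx.le (sq_nonneg (p.2.2 - p.2.1))]
  · rw [← (strictMonoOn_sq_mul_sub b).le_iff_le hpI hx₂, h₂, ← hprod, ← hsum]
    nlinarith [mul_nonneg (mul_nonneg hx.le (sub_nonneg.2 hxy)) (sub_nonneg.2 (hxy.trans hyz))]

end SymmetricCurve

end

open SymmetricCurve

theorem stmt_5 (a b r : ℝ) (ha : 0 < a) (hb : 0 < b) (hab : b ^ 3 > 27 * a) (hr : 1 < r) :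
    ∃ pmax ∈ {p : ℝ × ℝ × ℝ | 0 < p.1 ∧ p.1 ≤ p.2.1 ∧ p.2.1 ≤ p.2.2 ∧
        p.1 * p.2.1 * p.2.2 = a ∧ p.1 + p.2.1 + p.2.2 = b},
    ∃ pmin ∈ {p : ℝ × ℝ × ℝ | 0 < p.1 ∧ p.1 ≤ p.2.1 ∧ p.2.1 ≤ p.2.2 ∧
        p.1 * p.2.1 * p.2.2 = a ∧ p.1 + p.2.1 + p.2.2 = b},
      (pmax.1 = pmax.2.1 ∧ pmax.2.1 < pmax.2.2) ∧
      (pmin.1 < pmin.2.1 ∧ pmin.2.1 = pmin.2.2) ∧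
      ∀ q ∈ {p : ℝ × ℝ × ℝ | 0 < p.1 ∧ p.1 ≤ p.2.1 ∧ p.2.1 ≤ p.2.2 ∧
          p.1 * p.2.1 * p.2.2 = a ∧ p.1 + p.2.1 + p.2.2 = b},
        q.1 ^ r + q.2.1 ^ r + q.2.2 ^ r ≤ pmax.1 ^ r + pmax.2.1 ^ r + pmax.2.2 ^ r ∧
        pmin.1 ^ r + pmin.2.1 ^ r + pmin.2.2 ^ r ≤ q.1 ^ r + q.2.1 ^ r + q.2.2 ^ r := by
  have hb3 : 0 ≤ b / 3 := by positivity
  obtain ⟨x₁, hx₁, hδ⟩ : ∃ x ∈ Ioo 0 (b / 3), x * (b - x) ^ 2 = 4 * a :=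
    intermediate_value_Ioo hb3 (by fun_prop) ⟨by simpa, by nlinarith⟩
  obtain ⟨x₂, hx₂, hφ⟩ : ∃ x ∈ Ioo 0 (b / 3), x ^ 2 * (b - 2 * x) = a :=
    intermediate_value_Ioo hb3 (by fun_prop) ⟨by simpa, by nlinarith⟩
  have hmin : (x₁, (b - x₁) / 2, (b - x₁) / 2) ∈ feasibleSet a b :=
    ⟨hx₁.1, by linarith [hx₁.2], le_rfl, by linear_combination hδ / 4, by ring⟩
  have hmax : (x₂, x₂, b - 2 * x₂) ∈ feasibleSet a b :=
    ⟨hx₂.1, le_rfl, by linarith [hx₂.2], by linear_combination hφ, by ring⟩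
  have hIcc : ∀ p ∈ feasibleSet a b, p.1 ∈ Icc x₁ x₂ := fun p hp =>
    fst_mem_Icc_of_mem_feasibleSet (Ioo_subset_Icc_self hx₁) hδ (Ioo_subset_Icc_self hx₂) hφ hp
  have hmono := monotoneOn_powerSum hr.le hx₁.1 hx₂.2.le hδ.ge hφ.le
  refine ⟨_, hmax, _, hmin, ⟨rfl, by linarith [hx₂.2]⟩, ⟨by linarith [hx₁.2], rfl⟩, fun q hq => ?_⟩
  rw [← powerSum_eq_of_mem_feasibleSet hq, ← powerSum_eq_of_mem_feasibleSet hmax,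
    ← powerSum_eq_of_mem_feasibleSet hmin]
  have hq₁ := hIcc q hq
  exact ⟨hmono hq₁ (hIcc _ hmax) hq₁.2, hmono (hIcc _ hmin) hq₁ hq₁.1⟩
end

section
/- Under the constraints x ≤ y ≤ z, xyz = α, x + y + z = β (α, β > 0, β³ > 27α), if r < 0 or 0 < r < 1 then the function h(x,y,z) = x^r + y^r + z^r attains its maximum when x < y = z and its minimum when x = y < z. -/
/-!
For `x > 0` the two larger coordinates of a point of the arc are the roots of
`t ^ 2 - (b - x) t + a / x`, so the arc is the graph of `x ↦ (x, y(x), z(x))` over an interval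
`[xm, xp]`, where `y = z` at `xm` and `x = y` at `xp`. Differentiating along the arc,
`d/dx (x ^ r + y ^ r + z ^ r) = r (x ^ r (z - y) + y ^ r (x - z) + z ^ r (y - x)) / (x (z - y))`,
and the bracket, a second divided difference of `t ↦ t ^ r`, is positive for `r < 0` (strict
convexity) and negative for `0 < r < 1` (strict concavity). Hence the power sum strictly decreases
along the arc: it is largest at `xm` and smallest at `xp`.
-/

open Real Set

section ThreePoint

variable {𝕜 : Type*} [Field 𝕜] [LinearOrder 𝕜] [IsStrictOrderedRing 𝕜] {s : Set 𝕜} {f : 𝕜 → 𝕜}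
  {x y z : 𝕜}

theorem StrictConvexOn.three_point_pos (hf : StrictConvexOn 𝕜 s f) (hx : x ∈ s) (hz : z ∈ s)
    (hxy : x < y) (hyz : y < z) : 0 < f x * (z - y) + f y * (x - z) + f z * (y - x) := by
  have h := hf.slope_strict_mono_adjacent hx hz hxy hyz
  rw [div_lt_div_iff₀ (sub_pos.2 hxy) (sub_pos.2 hyz)] at h
  linarith

theorem StrictConcaveOn.three_point_neg (hf : StrictConcaveOn 𝕜 s f) (hx : x ∈ s) (hz : z ∈ s)
    (hxy : x < y) (hyz : y < z) : f x * (z - y) + f y * (x - z) + f z * (y - x) < 0 := by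
  have h := hf.neg.three_point_pos hx hz hxy hyz
  simp only [Pi.neg_apply] at h
  linarith

end ThreePoint

theorem Real.strictConvexOn_rpow_of_neg {r : ℝ} (hr : r < 0) :
    StrictConvexOn ℝ (Ioi 0) fun x : ℝ ↦ x ^ r := by
  refine StrictMonoOn.strictConvexOn_of_deriv (convex_Ioi 0)
    (fun x hx ↦ (continuousAt_rpow_const x r (Or.inl hx.ne')).continuousWithinAt) ?_
  rw [interior_Ioi, deriv_rpow_const']
  intro x hx y _ hxy
  exact mul_lt_mul_of_neg_left (rpow_lt_rpow_of_neg hx hxy (by linarith)) hr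

theorem Real.mul_three_point_rpow_neg {r x y z : ℝ} (hr : r < 0 ∨ 0 < r ∧ r < 1) (hx : 0 < x)
    (hxy : x < y) (hyz : y < z) :
    r * (x ^ r * (z - y) + y ^ r * (x - z) + z ^ r * (y - x)) < 0 := by
  have hz : 0 < z := hx.trans (hxy.trans hyz)
  rcases hr with hr | ⟨hr0, hr1⟩
  · exact mul_neg_of_neg_of_pos hr
      ((strictConvexOn_rpow_of_neg hr).three_point_pos hx hz hxy hyz)
  · exact mul_neg_of_pos_of_neg hr0
      ((strictConcaveOn_rpow hr0 hr1).three_point_neg hx.le hz.le hxy hyz)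

namespace SumProdArc

def arc (a b : ℝ) : Set (ℝ × ℝ × ℝ) :=
  {p | 0 < p.1 ∧ p.1 ≤ p.2.1 ∧ p.2.1 ≤ p.2.2 ∧ p.1 * p.2.1 * p.2.2 = a ∧ p.1 + p.2.1 + p.2.2 = b}

noncomputable def powSum (r : ℝ) (p : ℝ × ℝ × ℝ) : ℝ := p.1 ^ r + p.2.1 ^ r + p.2.2 ^ r

noncomputable def disc (a b x : ℝ) : ℝ := (b - x) ^ 2 - 4 * a / x

noncomputable def midRoot (a b x : ℝ) : ℝ := (b - x - √(disc a b x)) / 2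

noncomputable def topRoot (a b x : ℝ) : ℝ := (b - x + √(disc a b x)) / 2

noncomputable def arcPoint (a b x : ℝ) : ℝ × ℝ × ℝ := (x, midRoot a b x, topRoot a b x)

/-- On the arc, `discNumer a b x = x (z - y) ^ 2` and `lowGap a b x = x (y - x) (z - x)`;
their roots in `(0, b / 3)` are the endpoints of the arc. -/
def discNumer (a b x : ℝ) : ℝ := x * (b - x) ^ 2 - 4 * a

def lowGap (a b x : ℝ) : ℝ := 2 * x ^ 3 - b * x ^ 2 + a

def arcDomain (a b : ℝ) : Set ℝ :=
  {x | 0 < x ∧ 3 * x ≤ b ∧ 0 ≤ discNumer a b x ∧ 0 ≤ lowGap a b x}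

variable {a b x : ℝ}

theorem discNumer_eq_mul_disc (hx : x ≠ 0) : discNumer a b x = x * disc a b x := by
  unfold disc discNumer
  field_simp

theorem lowGap_eq_mul (hx : x ≠ 0) :
    lowGap a b x = x * ((b - 3 * x) ^ 2 - disc a b x) / 4 := by
  unfold disc lowGap
  field_simp
  ring

theorem topRoot_sub_midRoot : topRoot a b x - midRoot a b x = √(disc a b x) := by
  unfold midRoot topRoot
  ring

theorem midRoot_sub_self : midRoot a b x - x = (b - 3 * x - √(disc a b x)) / 2 := by
  unfold midRoot
  ring

theorem self_add_midRoot_add_topRoot : x + midRoot a b x + topRoot a b x = b := by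
  unfold midRoot topRoot
  ring

theorem self_mul_midRoot_mul_topRoot (hx : x ≠ 0) (hD : 0 ≤ disc a b x) :
    x * midRoot a b x * topRoot a b x = a := by
  have hs := sq_sqrt hD
  have hx4 : x * (4 * a / x) = 4 * a := mul_div_cancel₀ _ hx
  unfold midRoot topRoot
  generalize √(disc a b x) = s at hs ⊢
  unfold disc at hs
  linear_combination (-x / 4) * hs + hx4 / 4

theorem midRoot_pos (ha : 0 < a) (hx : 0 < x) (hxb : x < b) : 0 < midRoot a b x := by
  have : √(disc a b x) < b - x := by
    rw [sqrt_lt' (by linarith), disc, sub_lt_self_iff]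
    positivity
  unfold midRoot
  linarith

theorem midRoot_le_topRoot : midRoot a b x ≤ topRoot a b x := by
  linarith [topRoot_sub_midRoot (a := a) (b := b) (x := x), sqrt_nonneg (disc a b x)]

theorem midRoot_lt_topRoot (hD : 0 < disc a b x) : midRoot a b x < topRoot a b x := by
  linarith [topRoot_sub_midRoot (a := a) (b := b) (x := x), sqrt_pos.2 hD]

theorem self_le_midRoot (hx3 : 3 * x ≤ b) (hD : disc a b x ≤ (b - 3 * x) ^ 2) :
    x ≤ midRoot a b x := by
  have : √(disc a b x) ≤ b - 3 * x := sqrt_le_iff.2 ⟨by linarith, hD⟩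
  linarith [midRoot_sub_self (a := a) (b := b) (x := x)]

theorem self_lt_midRoot (hx3 : 3 * x < b) (hD : disc a b x < (b - 3 * x) ^ 2) :
    x < midRoot a b x := by
  have : √(disc a b x) < b - 3 * x := (sqrt_lt' (by linarith)).2 hD
  linarith [midRoot_sub_self (a := a) (b := b) (x := x)]

theorem self_lt_midRoot_eq_topRoot (hx : 0 < x) (hx3 : 3 * x < b) (hg : discNumer a b x = 0) :
    x < midRoot a b x ∧ midRoot a b x = topRoot a b x := by
  rw [discNumer_eq_mul_disc hx.ne', mul_eq_zero, or_iff_right hx.ne'] at hg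
  have hs : √(disc a b x) = 0 := by rw [hg, sqrt_zero]
  constructor
  · linarith [midRoot_sub_self (a := a) (b := b) (x := x)]
  · linarith [topRoot_sub_midRoot (a := a) (b := b) (x := x)]

theorem self_eq_midRoot_lt_topRoot (hx : 0 < x) (hx3 : 3 * x < b) (hq : lowGap a b x = 0) :
    x = midRoot a b x ∧ midRoot a b x < topRoot a b x := by
  rw [lowGap_eq_mul hx.ne', mul_div_assoc, mul_eq_zero, or_iff_right hx.ne'] at hq
  have hs : √(disc a b x) = b - 3 * x := by
    rw [show disc a b x = (b - 3 * x) ^ 2 by linarith, sqrt_sq (by linarith)]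
  constructor
  · linarith [midRoot_sub_self (a := a) (b := b) (x := x)]
  · linarith [topRoot_sub_midRoot (a := a) (b := b) (x := x)]

theorem disc_eq_sq_of_mem_arc {p : ℝ × ℝ × ℝ} (hp : p ∈ arc a b) :
    disc a b p.1 = (p.2.2 - p.2.1) ^ 2 := by
  obtain ⟨hx, -, -, hprod, hsum⟩ := hp
  have : 4 * a / p.1 = 4 * (p.2.1 * p.2.2) := by
    rw [div_eq_iff hx.ne', ← hprod]
    ring
  rw [disc, this, ← hsum]
  ring

theorem arc_eq_image : arc a b = arcPoint a b '' arcDomain a b := by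
  ext p
  constructor
  · intro hp
    have hD := disc_eq_sq_of_mem_arc hp
    obtain ⟨hx, hxy, hyz, -, hsum⟩ := hp
    have hs : √(disc a b p.1) = p.2.2 - p.2.1 := by rw [hD, sqrt_sq (by linarith)]
    refine ⟨p.1, ⟨hx, by linarith, ?_, ?_⟩, ?_⟩
    · rw [discNumer_eq_mul_disc hx.ne', hD]
      positivity
    · have : (b - 3 * p.1) ^ 2 - disc a b p.1 = 4 * ((p.2.1 - p.1) * (p.2.2 - p.1)) := by
        rw [hD, ← hsum]
        ring
      rw [lowGap_eq_mul hx.ne', this]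
      have := mul_nonneg (sub_nonneg.2 hxy) (sub_nonneg.2 (hxy.trans hyz))
      positivity
    · ext
      · rfl
      · simp only [arcPoint, midRoot, hs]; linarith
      · simp only [arcPoint, topRoot, hs]; linarith
  · rintro ⟨x, ⟨hx, hx3, hg, hq⟩, rfl⟩
    rw [discNumer_eq_mul_disc hx.ne', mul_nonneg_iff_of_pos_left hx] at hg
    rw [lowGap_eq_mul hx.ne', mul_div_assoc, mul_nonneg_iff_of_pos_left hx] at hq
    have hD : disc a b x ≤ (b - 3 * x) ^ 2 := by linarith
    exact ⟨hx, self_le_midRoot hx3 hD, midRoot_le_topRoot,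
      self_mul_midRoot_mul_topRoot hx.ne' hg, self_add_midRoot_add_topRoot⟩

theorem strictMonoOn_discNumer : StrictMonoOn (discNumer a b) (Icc 0 (b / 3)) := by
  rintro x ⟨hx0, -⟩ y ⟨-, hyb⟩ hxy
  have hfactor : discNumer a b y - discNumer a b x = (y - x) * ((b - x - y) ^ 2 - x * y) := by
    unfold discNumer
    ring
  have : x * y < (b - x - y) ^ 2 := by nlinarith
  rw [← sub_pos, hfactor]
  exact mul_pos (sub_pos.2 hxy) (sub_pos.2 this)

theorem strictAntiOn_lowGap : StrictAntiOn (lowGap a b) (Icc 0 (b / 3)) := by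
  rintro x ⟨hx0, -⟩ y ⟨-, hyb⟩ hxy
  have hfactor : lowGap a b x - lowGap a b y =
      (y - x) * (b * (x + y) - 2 * (x ^ 2 + x * y + y ^ 2)) := by
    unfold lowGap
    ring
  have : 2 * (x ^ 2 + x * y + y ^ 2) < b * (x + y) := by nlinarith
  rw [← sub_pos, hfactor]
  exact mul_pos (sub_pos.2 hxy) (sub_pos.2 this)

theorem exists_discNumer_eq_zero_lowGap_eq_zero (ha : 0 < a) (hab : 27 * a < b ^ 3) :
    ∃ xm xp, 0 < xm ∧ xm < xp ∧ 3 * xp < b ∧ discNumer a b xm = 0 ∧ lowGap a b xp = 0 := by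
  have hb : 0 < b := (Odd.pow_pos_iff (by decide)).1 (show 0 < b ^ 3 by linarith)
  have hb3 : 0 ≤ b / 3 := by positivity
  obtain ⟨xm, ⟨hxm, hxmb⟩, hgm⟩ : (0 : ℝ) ∈ discNumer a b '' Ioo 0 (b / 3) :=
    intermediate_value_Ioo hb3 (by unfold discNumer; fun_prop)
      ⟨by simp [discNumer, ha], by simp only [discNumer]; nlinarith⟩
  obtain ⟨xp, ⟨hxp, hxpb⟩, hqp⟩ : (0 : ℝ) ∈ lowGap a b '' Ioo 0 (b / 3) :=
    intermediate_value_Ioo' hb3 (by unfold lowGap; fun_prop)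
      ⟨by simp only [lowGap]; nlinarith, by simp [lowGap, ha]⟩
  have hgp : 0 < discNumer a b xp := by
    have hfactor : discNumer a b xp = xp * (b - 3 * xp) ^ 2 := by
      unfold discNumer
      unfold lowGap at hqp
      linear_combination -4 * hqp
    rw [hfactor]
    have : 0 < b - 3 * xp := by linarith
    positivity
  refine ⟨xm, xp, hxm, ?_, by linarith, hgm, hqp⟩
  exact (strictMonoOn_discNumer.lt_iff_lt ⟨hxm.le, hxmb.le⟩ ⟨hxp.le, hxpb.le⟩).1 (hgm ▸ hgp)

theorem arcDomain_eq_Icc {xm xp : ℝ} (hxm : 0 < xm) (hxmp : xm ≤ xp) (hxp : 3 * xp ≤ b)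
    (hgm : discNumer a b xm = 0) (hqp : lowGap a b xp = 0) : arcDomain a b = Icc xm xp := by
  have hxmI : xm ∈ Icc 0 (b / 3) := ⟨hxm.le, by linarith⟩
  have hxpI : xp ∈ Icc 0 (b / 3) := ⟨by linarith, by linarith⟩
  ext x
  constructor
  · rintro ⟨hx, hx3, hg, hq⟩
    have hxI : x ∈ Icc 0 (b / 3) := ⟨hx.le, by linarith⟩
    exact ⟨(strictMonoOn_discNumer.le_iff_le hxmI hxI).1 (hgm ▸ hg),
      (strictAntiOn_lowGap.le_iff_ge hxpI hxI).1 (hqp ▸ hq)⟩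
  · rintro ⟨hmx, hxp'⟩
    have hxI : x ∈ Icc 0 (b / 3) := ⟨by linarith, by linarith⟩
    exact ⟨by linarith, by linarith, hgm ▸ strictMonoOn_discNumer.monotoneOn hxmI hxI hmx,
      hqp ▸ strictAntiOn_lowGap.antitoneOn hxI hxpI hxp'⟩

theorem hasDerivAt_disc (hx : x ≠ 0) :
    HasDerivAt (disc a b) (4 * a / x ^ 2 - 2 * (b - x)) x := by
  have h : HasDerivAt (disc a b) _ x := (((hasDerivAt_id' x).const_sub b).pow 2).sub
    ((hasDerivAt_const x (4 * a)).div (hasDerivAt_id' x) hx)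
  exact h.congr_deriv (by push_cast; ring)

theorem hasDerivAt_midRoot (hx : x ≠ 0) (hD : 0 < disc a b x) :
    HasDerivAt (midRoot a b)
      (midRoot a b x * (x - topRoot a b x) / (x * (topRoot a b x - midRoot a b x))) x := by
  have h : HasDerivAt (midRoot a b)
      ((-1 - (4 * a / x ^ 2 - 2 * (b - x)) / (2 * √(disc a b x))) / 2) x :=
    (((hasDerivAt_id x).const_sub b).sub ((hasDerivAt_disc hx).sqrt hD.ne')).div_const 2
  refine h.congr_deriv ?_
  have hs := topRoot_sub_midRoot (a := a) (b := b) (x := x)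
  have hprod := self_mul_midRoot_mul_topRoot hx hD.le
  have hsum := self_add_midRoot_add_topRoot (a := a) (b := b) (x := x)
  have hs0 : √(disc a b x) ≠ 0 := (sqrt_pos.2 hD).ne'
  rw [← hs] at hs0 ⊢
  generalize midRoot a b x = y at *
  generalize topRoot a b x = z at *
  subst hprod hsum
  field_simp
  ring

theorem hasDerivAt_topRoot (hx : x ≠ 0) (hD : 0 < disc a b x) :
    HasDerivAt (topRoot a b)
      (topRoot a b x * (midRoot a b x - x) / (x * (topRoot a b x - midRoot a b x))) x := by
  have hsum (t : ℝ) : topRoot a b t = b - t - midRoot a b t := by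
    linarith [self_add_midRoot_add_topRoot (a := a) (b := b) (x := t)]
  refine ((((hasDerivAt_id x).const_sub b).sub (hasDerivAt_midRoot hx hD)).congr_of_eventuallyEq
    (.of_forall hsum)).congr_deriv ?_
  have : topRoot a b x - midRoot a b x ≠ 0 := (sub_pos.2 (midRoot_lt_topRoot hD)).ne'
  field_simp
  ring

theorem hasDerivAt_powSum_arcPoint (r : ℝ) (ha : 0 < a) (hx : 0 < x) (hxb : x < b)
    (hD : 0 < disc a b x) :
    HasDerivAt (powSum r ∘ arcPoint a b)
      (r * (x ^ r * (topRoot a b x - midRoot a b x) + midRoot a b x ^ r * (x - topRoot a b x) +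
        topRoot a b x ^ r * (midRoot a b x - x)) / (x * (topRoot a b x - midRoot a b x))) x := by
  have hy := midRoot_pos ha hx hxb
  have hz := hy.trans_le midRoot_le_topRoot
  have h : HasDerivAt (powSum r ∘ arcPoint a b) _ x :=
    ((hasDerivAt_rpow_const (Or.inl hx.ne')).add
      ((hasDerivAt_midRoot hx.ne' hD).rpow_const (Or.inl hy.ne'))).add
      ((hasDerivAt_topRoot hx.ne' hD).rpow_const (Or.inl hz.ne'))
  refine h.congr_deriv ?_
  rw [rpow_sub_one hx.ne', rpow_sub_one hy.ne', rpow_sub_one hz.ne']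
  have : topRoot a b x - midRoot a b x ≠ 0 := (sub_pos.2 (midRoot_lt_topRoot hD)).ne'
  field_simp

theorem continuousOn_powSum_arcPoint (r : ℝ) (ha : 0 < a) :
    ContinuousOn (powSum r ∘ arcPoint a b) (Ioo 0 b) := by
  have hy : ∀ t ∈ Ioo 0 b, 0 < midRoot a b t := fun t ht ↦ midRoot_pos ha ht.1 ht.2
  have hz : ∀ t ∈ Ioo 0 b, 0 < topRoot a b t := fun t ht ↦ (hy t ht).trans_le midRoot_le_topRoot
  have hs : ContinuousOn (fun t ↦ √(disc a b t)) (Ioo 0 b) :=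
    (((continuousOn_const.sub continuousOn_id).pow 2).sub
      (continuousOn_const.div continuousOn_id fun t ht ↦ ht.1.ne')).sqrt
  have hyc : ContinuousOn (midRoot a b) (Ioo 0 b) := by unfold midRoot; fun_prop
  have hzc : ContinuousOn (topRoot a b) (Ioo 0 b) := by unfold topRoot; fun_prop
  exact ((continuousOn_id.rpow_const fun t ht ↦ Or.inl ht.1.ne').add
    (hyc.rpow_const fun t ht ↦ Or.inl (hy t ht).ne')).add
    (hzc.rpow_const fun t ht ↦ Or.inl (hz t ht).ne')

theorem strictAntiOn_powSum_arcPoint {r xm xp : ℝ} (hr : r < 0 ∨ 0 < r ∧ r < 1) (ha : 0 < a)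
    (hxm : 0 < xm) (hxp : 3 * xp ≤ b) (hgm : discNumer a b xm = 0) (hqp : lowGap a b xp = 0) :
    StrictAntiOn (powSum r ∘ arcPoint a b) (Icc xm xp) := by
  have hsub : Icc xm xp ⊆ Ioo 0 b := fun x hx ↦ ⟨hxm.trans_le hx.1, by linarith [hx.1, hx.2]⟩
  refine strictAntiOn_of_deriv_neg (convex_Icc xm xp)
    ((continuousOn_powSum_arcPoint r ha).mono hsub) fun x hx ↦ ?_
  rw [interior_Icc] at hx
  have hx0 : 0 < x := hxm.trans hx.1
  have hxI : x ∈ Icc 0 (b / 3) := ⟨hx0.le, by linarith [hx.2]⟩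
  have hD : 0 < disc a b x := by
    have := strictMonoOn_discNumer (a := a) ⟨hxm.le, by linarith [hx.1, hx.2]⟩ hxI hx.1
    rwa [hgm, discNumer_eq_mul_disc hx0.ne', mul_pos_iff_of_pos_left hx0] at this
  have hxy : x < midRoot a b x := by
    have := strictAntiOn_lowGap (a := a) hxI ⟨by linarith [hx.2], by linarith⟩ hx.2
    rw [hqp, lowGap_eq_mul hx0.ne', mul_div_assoc, mul_pos_iff_of_pos_left hx0] at this
    exact self_lt_midRoot (by linarith [hx.2]) (by linarith)
  have hyz := midRoot_lt_topRoot hD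
  rw [(hasDerivAt_powSum_arcPoint r ha hx0 (by linarith [hx.2]) hD).deriv]
  exact div_neg_of_neg_of_pos (mul_three_point_rpow_neg hr hx0 hxy hyz)
    (mul_pos hx0 (sub_pos.2 hyz))

end SumProdArc

open SumProdArc

theorem stmt_6_general (a b r : ℝ) (ha : 0 < a) (hab : b ^ 3 > 27 * a) (hr : r < 0 ∨ (0 < r ∧ r < 1)) :
    ∃ pmax ∈ {p : ℝ × ℝ × ℝ | 0 < p.1 ∧ p.1 ≤ p.2.1 ∧ p.2.1 ≤ p.2.2 ∧
        p.1 * p.2.1 * p.2.2 = a ∧ p.1 + p.2.1 + p.2.2 = b},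
    ∃ pmin ∈ {p : ℝ × ℝ × ℝ | 0 < p.1 ∧ p.1 ≤ p.2.1 ∧ p.2.1 ≤ p.2.2 ∧
        p.1 * p.2.1 * p.2.2 = a ∧ p.1 + p.2.1 + p.2.2 = b},
      (pmax.1 < pmax.2.1 ∧ pmax.2.1 = pmax.2.2) ∧
      (pmin.1 = pmin.2.1 ∧ pmin.2.1 < pmin.2.2) ∧
      ∀ q ∈ {p : ℝ × ℝ × ℝ | 0 < p.1 ∧ p.1 ≤ p.2.1 ∧ p.2.1 ≤ p.2.2 ∧
          p.1 * p.2.1 * p.2.2 = a ∧ p.1 + p.2.1 + p.2.2 = b},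
        q.1 ^ r + q.2.1 ^ r + q.2.2 ^ r ≤ pmax.1 ^ r + pmax.2.1 ^ r + pmax.2.2 ^ r ∧
        pmin.1 ^ r + pmin.2.1 ^ r + pmin.2.2 ^ r ≤ q.1 ^ r + q.2.1 ^ r + q.2.2 ^ r := by
  obtain ⟨xm, xp, hxm, hxmp, hxp, hgm, hqp⟩ := exists_discNumer_eq_zero_lowGap_eq_zero ha hab
  have harc : arc a b = arcPoint a b '' Icc xm xp := by
    rw [arc_eq_image, arcDomain_eq_Icc hxm hxmp.le hxp.le hgm hqp]
  have hanti := strictAntiOn_powSum_arcPoint hr ha hxm hxp.le hgm hqp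
  have hxmI : xm ∈ Icc xm xp := left_mem_Icc.2 hxmp.le
  have hxpI : xp ∈ Icc xm xp := right_mem_Icc.2 hxmp.le
  change ∃ pmax ∈ arc a b, ∃ pmin ∈ arc a b, _ ∧ _ ∧
    ∀ q ∈ arc a b, powSum r q ≤ powSum r pmax ∧ powSum r pmin ≤ powSum r q
  rw [harc]
  refine ⟨_, mem_image_of_mem _ hxmI, _, mem_image_of_mem _ hxpI,
    self_lt_midRoot_eq_topRoot hxm (show 3 * xm < b by linarith) hgm,
    self_eq_midRoot_lt_topRoot (hxm.trans hxmp) hxp hqp, ?_⟩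
  rintro _ ⟨x, hx, rfl⟩
  exact ⟨hanti.antitoneOn hxmI hx hx.1, hanti.antitoneOn hx hxpI hx.2⟩

theorem stmt_6 (a b r : ℝ) (ha : 0 < a) (hb : 0 < b) (hab : b ^ 3 > 27 * a) (hr : r < 0 ∨ (0 < r ∧ r < 1)) :
    ∃ pmax ∈ {p : ℝ × ℝ × ℝ | 0 < p.1 ∧ p.1 ≤ p.2.1 ∧ p.2.1 ≤ p.2.2 ∧
        p.1 * p.2.1 * p.2.2 = a ∧ p.1 + p.2.1 + p.2.2 = b},
    ∃ pmin ∈ {p : ℝ × ℝ × ℝ | 0 < p.1 ∧ p.1 ≤ p.2.1 ∧ p.2.1 ≤ p.2.2 ∧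
        p.1 * p.2.1 * p.2.2 = a ∧ p.1 + p.2.1 + p.2.2 = b},
      (pmax.1 < pmax.2.1 ∧ pmax.2.1 = pmax.2.2) ∧
      (pmin.1 = pmin.2.1 ∧ pmin.2.1 < pmin.2.2) ∧
      ∀ q ∈ {p : ℝ × ℝ × ℝ | 0 < p.1 ∧ p.1 ≤ p.2.1 ∧ p.2.1 ≤ p.2.2 ∧
          p.1 * p.2.1 * p.2.2 = a ∧ p.1 + p.2.1 + p.2.2 = b},
        q.1 ^ r + q.2.1 ^ r + q.2.2 ^ r ≤ pmax.1 ^ r + pmax.2.1 ^ r + pmax.2.2 ^ r ∧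
        pmin.1 ^ r + pmin.2.1 ^ r + pmin.2.2 ^ r ≤ q.1 ^ r + q.2.1 ^ r + q.2.2 ^ r :=
  stmt_6_general a b r ha hab hr
end

section
/- Let f₁, f₂ : [a,b] → ℝ be continuous on [a,b], differentiable on (a,b), with f₂'(x) ≠ 0 on (a,b). If f₁'/f₂' is (strictly) increasing on (a,b), then so are the functions x ↦ (f₁(x) - f₁(a))/(f₂(x) - f₂(a)) and x ↦ (f₁(x) - f₁(b))/(f₂(x) - f₂(b)). -/
/-!
By Cauchy's mean value theorem every secant ratio `(f₁ v - f₁ u) / (f₂ v - f₂ u)` equals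
`f₁' c / f₂' c` for some `c ∈ (u, v)`, so for `u < v < w` the ratio on `[u, v]` is smaller
than the ratio on `[v, w]`. Since `f₂'` never vanishes, `f₂` is strictly monotone, so the
differences of `f₂` over `[u, v]` and `[v, w]` have the same sign and the ratio on `[u, w]` is
their mediant, which lies strictly between them. Taking `u = a` gives the first monotonicity,
taking `w = b` the second.
-/

open Set

section Mediant

variable {𝕜 : Type*} [Field 𝕜] [LinearOrder 𝕜] [IsStrictOrderedRing 𝕜] {a b c d : 𝕜}

theorem mediant_mem_Ioo_of_pos (hb : 0 < b) (hd : 0 < d) (h : a / b < c / d) :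
    (a + c) / (b + d) ∈ Ioo (a / b) (c / d) := by
  have hbd : 0 < b + d := add_pos hb hd
  rw [div_lt_div_iff₀ hb hd] at h
  constructor
  · rw [div_lt_div_iff₀ hb hbd]; linarith
  · rw [div_lt_div_iff₀ hbd hd]; linarith

theorem mediant_mem_Ioo (hbd : 0 < b * d) (h : a / b < c / d) :
    (a + c) / (b + d) ∈ Ioo (a / b) (c / d) := by
  rcases pos_and_pos_or_neg_and_neg_of_mul_pos hbd with ⟨hb, hd⟩ | ⟨hb, hd⟩
  · exact mediant_mem_Ioo_of_pos hb hd h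
  · rw [← neg_div_neg_eq a, ← neg_div_neg_eq c, ← neg_div_neg_eq (a + c), neg_add, neg_add] at *
    exact mediant_mem_Ioo_of_pos (neg_pos.2 hb) (neg_pos.2 hd) h

end Mediant

section NonvanishingDeriv

variable {g g' : ℝ → ℝ} {a b : ℝ}

theorem injOn_of_hasDerivAt_ne_zero (hgc : ContinuousOn g (Icc a b))
    (hg : ∀ x ∈ Ioo a b, HasDerivAt g (g' x) x) (hg' : ∀ x ∈ Ioo a b, g' x ≠ 0) :
    InjOn g (Icc a b) := by
  have rolle : ∀ u ∈ Icc a b, ∀ v ∈ Icc a b, u < v → g u ≠ g v := by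
    intro u hu v hv huv hguv
    obtain ⟨x, hx, hx0⟩ := exists_hasDerivAt_eq_zero huv (hgc.mono (Icc_subset_Icc hu.1 hv.2))
      hguv (fun x hx ↦ hg x (Ioo_subset_Ioo hu.1 hv.2 hx))
    exact hg' x (Ioo_subset_Ioo hu.1 hv.2 hx) hx0
  intro u hu v hv huv
  by_contra hne
  rcases lt_or_gt_of_ne hne with h | h
  · exact rolle u hu v hv h huv
  · exact rolle v hv u hu h huv.symm

theorem sub_mul_sub_pos_of_hasDerivAt_ne_zero {u v w : ℝ} (hu : u ∈ Icc a b) (hw : w ∈ Icc a b)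
    (huv : u < v) (hvw : v < w) (hgc : ContinuousOn g (Icc a b))
    (hg : ∀ x ∈ Ioo a b, HasDerivAt g (g' x) x) (hg' : ∀ x ∈ Ioo a b, g' x ≠ 0) :
    0 < (g v - g u) * (g w - g v) := by
  have hv : v ∈ Icc a b := ⟨hu.1.trans huv.le, hvw.le.trans hw.2⟩
  rcases hgc.strictMonoOn_of_injOn_Icc' (hu.1.trans hu.2)
    (injOn_of_hasDerivAt_ne_zero hgc hg hg') with hmono | hanti
  · exact mul_pos (sub_pos.2 (hmono hu hv huv)) (sub_pos.2 (hmono hv hw hvw))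
  · exact mul_pos_of_neg_of_neg (sub_neg.2 (hanti hu hv huv)) (sub_neg.2 (hanti hv hw hvw))

end NonvanishingDeriv

noncomputable def secantRatio (f g : ℝ → ℝ) (u v : ℝ) : ℝ := (f v - f u) / (g v - g u)

theorem secantRatio_comm (f g : ℝ → ℝ) (u v : ℝ) : secantRatio f g u v = secantRatio f g v u := by
  rw [secantRatio, secantRatio, ← neg_div_neg_eq, neg_sub, neg_sub]

section SecantRatio

variable {f g f' g' : ℝ → ℝ} {a b : ℝ}

theorem exists_secantRatio_eq_div_deriv {u v : ℝ} (hu : u ∈ Icc a b) (hv : v ∈ Icc a b)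
    (huv : u < v) (hfc : ContinuousOn f (Icc a b)) (hf : ∀ x ∈ Ioo a b, HasDerivAt f (f' x) x)
    (hgc : ContinuousOn g (Icc a b)) (hg : ∀ x ∈ Ioo a b, HasDerivAt g (g' x) x)
    (hg' : ∀ x ∈ Ioo a b, g' x ≠ 0) :
    ∃ c ∈ Ioo u v, secantRatio f g u v = f' c / g' c := by
  have hIcc : Icc u v ⊆ Icc a b := Icc_subset_Icc hu.1 hv.2
  have hIoo : Ioo u v ⊆ Ioo a b := Ioo_subset_Ioo hu.1 hv.2
  obtain ⟨c, hc, hcauchy⟩ := exists_ratio_hasDerivAt_eq_ratio_slope f f' huv (hfc.mono hIcc)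
    (fun x hx ↦ hf x (hIoo hx)) g g' (hgc.mono hIcc) (fun x hx ↦ hg x (hIoo hx))
  have hguv : g v - g u ≠ 0 :=
    sub_ne_zero.2 fun h ↦ huv.ne' (injOn_of_hasDerivAt_ne_zero hgc hg hg' hv hu h)
  exact ⟨c, hc, (div_eq_div_iff hguv (hg' c (hIoo hc))).2 (by linarith)⟩

theorem secantRatio_mem_Ioo {u v w : ℝ} (hu : u ∈ Icc a b) (hw : w ∈ Icc a b)
    (huv : u < v) (hvw : v < w)
    (hfc : ContinuousOn f (Icc a b)) (hf : ∀ x ∈ Ioo a b, HasDerivAt f (f' x) x)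
    (hgc : ContinuousOn g (Icc a b)) (hg : ∀ x ∈ Ioo a b, HasDerivAt g (g' x) x)
    (hg' : ∀ x ∈ Ioo a b, g' x ≠ 0) (hmono : StrictMonoOn (fun x ↦ f' x / g' x) (Ioo a b)) :
    secantRatio f g u w ∈ Ioo (secantRatio f g u v) (secantRatio f g v w) := by
  have hv : v ∈ Icc a b := ⟨hu.1.trans huv.le, hvw.le.trans hw.2⟩
  obtain ⟨ξ, hξ, hξeq⟩ := exists_secantRatio_eq_div_deriv hu hv huv hfc hf hgc hg hg'
  obtain ⟨η, hη, hηeq⟩ := exists_secantRatio_eq_div_deriv hv hw hvw hfc hf hgc hg hg'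
  have hlt : secantRatio f g u v < secantRatio f g v w := by
    rw [hξeq, hηeq]
    exact hmono ⟨hu.1.trans_lt hξ.1, hξ.2.trans_le (hvw.le.trans hw.2)⟩
      ⟨hu.1.trans_lt (huv.trans hη.1), hη.2.trans_le hw.2⟩ (hξ.2.trans hη.1)
  have hmediant := mediant_mem_Ioo
    (sub_mul_sub_pos_of_hasDerivAt_ne_zero hu hw huv hvw hgc hg hg') hlt
  rwa [sub_add_sub_cancel', sub_add_sub_cancel'] at hmediant

end SecantRatio

theorem stmt_8_general (a b : ℝ) (f₁ f₂ f₁' f₂' : ℝ → ℝ)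
    (hc₁ : ContinuousOn f₁ (Icc a b)) (hc₂ : ContinuousOn f₂ (Icc a b))
    (hd₁ : ∀ x ∈ Ioo a b, HasDerivAt f₁ (f₁' x) x)
    (hd₂ : ∀ x ∈ Ioo a b, HasDerivAt f₂ (f₂' x) x)
    (hne : ∀ x ∈ Ioo a b, f₂' x ≠ 0)
    (hmono : StrictMonoOn (fun x => f₁' x / f₂' x) (Ioo a b)) :
    StrictMonoOn (fun x => (f₁ x - f₁ a) / (f₂ x - f₂ a)) (Ioo a b) ∧
    StrictMonoOn (fun x => (f₁ x - f₁ b) / (f₂ x - f₂ b)) (Ioo a b) := by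
  constructor
  · intro x hx y hy hxy
    exact (secantRatio_mem_Ioo (left_mem_Icc.2 (hx.1.trans hx.2).le) (Ioo_subset_Icc_self hy)
      hx.1 hxy hc₁ hd₁ hc₂ hd₂ hne hmono).1
  · intro x hx y hy hxy
    have h := (secantRatio_mem_Ioo (Ioo_subset_Icc_self hx) (right_mem_Icc.2 (hy.1.trans hy.2).le)
      hxy hy.2 hc₁ hd₁ hc₂ hd₂ hne hmono).2
    rwa [secantRatio_comm f₁ f₂ x, secantRatio_comm f₁ f₂ y] at h

theorem stmt_8 (a b : ℝ) (hab : a < b) (f₁ f₂ f₁' f₂' : ℝ → ℝ)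
    (hc₁ : ContinuousOn f₁ (Icc a b)) (hc₂ : ContinuousOn f₂ (Icc a b))
    (hd₁ : ∀ x ∈ Ioo a b, HasDerivAt f₁ (f₁' x) x)
    (hd₂ : ∀ x ∈ Ioo a b, HasDerivAt f₂ (f₂' x) x)
    (hne : ∀ x ∈ Ioo a b, f₂' x ≠ 0)
    (hmono : StrictMonoOn (fun x => f₁' x / f₂' x) (Ioo a b)) :
    StrictMonoOn (fun x => (f₁ x - f₁ a) / (f₂ x - f₂ a)) (Ioo a b) ∧
    StrictMonoOn (fun x => (f₁ x - f₁ b) / (f₂ x - f₂ b)) (Ioo a b) :=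
  stmt_8_general a b f₁ f₂ f₁' f₂' hc₁ hc₂ hd₁ hd₂ hne hmono
end

section
/- Let n > 2, r ≠ 0, 1, and define p(x) = (((n-1)x^{1/r} + (1-(n-1)x)^{1/r})/n)^r on (0, 1/(n-1)). Then p'(x) = (n-1)(x^{1/r - 1} - (1-(n-1)x)^{1/r - 1}) / ((n-1)x^{1/r} + (1-(n-1)x)^{1/r}) · p(x), and the sign of p''(x) on (0, 1/(n-1)) equals the opposite of the sign of r/(r-1). -/
/-!
Write `c = n - 1`, `y = 1 - c x` and `u = c x ^ (1/r) + y ^ (1/r)`, so that `p = (u / n) ^ r`.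
Logarithmic differentiation gives `p' = g p / u` with `g = c (x ^ (1/r - 1) - y ^ (1/r - 1)) = r u'`.
Differentiating again, `p'' = p (g' u + (1 - 1/r) g ^ 2) / u ^ 2`, and because `c x + y = 1` the
numerator collapses to `c (1/r - 1) x ^ (1/r - 2) y ^ (1/r - 2)`, whose sign is that of `(1 - r) / r`.
-/

theorem Real.sign_mul_of_pos {K a : ℝ} (hK : 0 < K) : Real.sign (K * a) = Real.sign a := by
  rcases lt_trichotomy a 0 with h | rfl | h
  · rw [Real.sign_of_neg h, Real.sign_of_neg (mul_neg_of_pos_of_neg hK h)]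
  · rw [mul_zero]
  · rw [Real.sign_of_pos h, Real.sign_of_pos (mul_pos hK h)]

section PowerSum

variable {c s x : ℝ}

theorem hasDerivAt_rpow_one_sub_mul (hy : 1 - c * x ≠ 0) :
    HasDerivAt (fun t => (1 - c * t) ^ s) (-c * s * (1 - c * x) ^ (s - 1)) x := by
  have hlin : HasDerivAt (fun t => 1 - c * t) (-c) x := by
    simpa using ((hasDerivAt_id x).const_mul c).const_sub 1
  exact hlin.rpow_const (Or.inl hy)

theorem hasDerivAt_mul_rpow_add_rpow_one_sub_mul (hx : x ≠ 0) (hy : 1 - c * x ≠ 0) :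
    HasDerivAt (fun t => c * t ^ s + (1 - c * t) ^ s)
      (s * (c * (x ^ (s - 1) - (1 - c * x) ^ (s - 1)))) x :=
  (((Real.hasDerivAt_rpow_const (Or.inl hx)).const_mul c).add
    (hasDerivAt_rpow_one_sub_mul (s := s) hy)).congr_deriv (by ring)

theorem hasDerivAt_mul_rpow_sub_rpow_one_sub_mul (hx : x ≠ 0) (hy : 1 - c * x ≠ 0) :
    HasDerivAt (fun t => c * (t ^ s - (1 - c * t) ^ s))
      (c * s * (x ^ (s - 1) + c * (1 - c * x) ^ (s - 1))) x :=
  (((Real.hasDerivAt_rpow_const (Or.inl hx)).sub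
    (hasDerivAt_rpow_one_sub_mul (s := s) hy)).const_mul c).congr_deriv (by ring)

/-- With `a = x ^ (s - 2)` and `b = y ^ (s - 2)` the left side is `c (s - 1) a b (c x + y) ^ 2`. -/
theorem secondDeriv_numerator_eq {y : ℝ} (hx : 0 < x) (hy : 0 < y) (hxy : c * x + y = 1) :
    c * (s - 1) * (x ^ (s - 2) + c * y ^ (s - 2)) * (c * x ^ s + y ^ s)
        + (1 - s) * (c * (x ^ (s - 1) - y ^ (s - 1))) ^ 2
      = c * (s - 1) * x ^ (s - 2) * y ^ (s - 2) := by
  have hx1 : x ^ (s - 1) = x ^ (s - 2) * x := by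
    rw [← Real.rpow_add_one hx.ne']; ring_nf
  have hy1 : y ^ (s - 1) = y ^ (s - 2) * y := by
    rw [← Real.rpow_add_one hy.ne']; ring_nf
  have hx0 : x ^ s = x ^ (s - 2) * x ^ 2 := by
    rw [← Real.rpow_natCast, ← Real.rpow_add hx]; norm_num
  have hy0 : y ^ s = y ^ (s - 2) * y ^ 2 := by
    rw [← Real.rpow_natCast, ← Real.rpow_add hy]; norm_num
  rw [hx1, hy1, hx0, hy0]
  linear_combination (c * (s - 1) * x ^ (s - 2) * y ^ (s - 2) * (c * x + y + 1)) * hxy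

end PowerSum

theorem HasDerivAt.div_const_rpow_const {u : ℝ → ℝ} {u' d r x : ℝ} (hu : HasDerivAt u u' x)
    (hux : u x ≠ 0) (hd : d ≠ 0) :
    HasDerivAt (fun t => (u t / d) ^ r) (r * u' / u x * (u x / d) ^ r) x := by
  convert (hu.div_const d).rpow_const (p := r) (Or.inl (div_ne_zero hux hd)) using 1
  rw [Real.rpow_sub_one (div_ne_zero hux hd)]
  field_simp

section PowerMean

variable {c d r x : ℝ}

theorem mul_rpow_add_rpow_one_sub_mul_pos (hc : 0 ≤ c) (hx : 0 < x) (hy : 0 < 1 - c * x) :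
    0 < c * x ^ (1 / r) + (1 - c * x) ^ (1 / r) :=
  add_pos_of_nonneg_of_pos (mul_nonneg hc (Real.rpow_nonneg hx.le _)) (Real.rpow_pos_of_pos hy _)

theorem hasDerivAt_powerMean (hr : r ≠ 0) (hd : d ≠ 0) (hc : 0 ≤ c) (hx : 0 < x)
    (hy : 0 < 1 - c * x) :
    HasDerivAt (fun t => ((c * t ^ (1 / r) + (1 - c * t) ^ (1 / r)) / d) ^ r)
      (c * (x ^ (1 / r - 1) - (1 - c * x) ^ (1 / r - 1)) /
        (c * x ^ (1 / r) + (1 - c * x) ^ (1 / r)) *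
        ((c * x ^ (1 / r) + (1 - c * x) ^ (1 / r)) / d) ^ r) x := by
  refine ((hasDerivAt_mul_rpow_add_rpow_one_sub_mul hx.ne' hy.ne').div_const_rpow_const
    (mul_rpow_add_rpow_one_sub_mul_pos hc hx hy).ne' hd).congr_deriv ?_
  field_simp

theorem hasDerivAt_powerMean_deriv (hr : r ≠ 0) (hd : d ≠ 0) (hc : 0 ≤ c) (hx : 0 < x)
    (hy : 0 < 1 - c * x) :
    HasDerivAt (fun t => c * (t ^ (1 / r - 1) - (1 - c * t) ^ (1 / r - 1)) /
        (c * t ^ (1 / r) + (1 - c * t) ^ (1 / r)) *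
        ((c * t ^ (1 / r) + (1 - c * t) ^ (1 / r)) / d) ^ r)
      (-(c * (r - 1) * x ^ (1 / r - 2) * (1 - c * x) ^ (1 / r - 2) *
          ((c * x ^ (1 / r) + (1 - c * x) ^ (1 / r)) / d) ^ r) /
        (r * (c * x ^ (1 / r) + (1 - c * x) ^ (1 / r)) ^ 2)) x := by
  have hu := mul_rpow_add_rpow_one_sub_mul_pos (r := r) hc hx hy
  have hg := hasDerivAt_mul_rpow_sub_rpow_one_sub_mul (s := 1 / r - 1) hx.ne' hy.ne'
  refine ((hg.div (hasDerivAt_mul_rpow_add_rpow_one_sub_mul hx.ne' hy.ne') hu.ne').mul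
    (hasDerivAt_powerMean hr hd hc hx hy)).congr_deriv ?_
  have key := secondDeriv_numerator_eq (c := c) (s := 1 / r) hx hy (by ring)
  simp only [Pi.div_apply]
  rw [show (1 / r - 1 - 1 : ℝ) = 1 / r - 2 by ring]
  -- hide the powers so that `field_simp` leaves their exponents alone
  generalize ((c * x ^ (1 / r) + (1 - c * x) ^ (1 / r)) / d) ^ r = P
  generalize x ^ (1 / r - 2) = A at key ⊢
  generalize (1 - c * x) ^ (1 / r - 2) = B at key ⊢
  generalize x ^ (1 / r - 1) = a at key ⊢
  generalize (1 - c * x) ^ (1 / r - 1) = b at key ⊢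
  generalize x ^ (1 / r) = a' at key hu ⊢
  generalize (1 - c * x) ^ (1 / r) = b' at key hu ⊢
  field_simp at key ⊢
  linear_combination P * key

theorem sign_powerMean_secondDeriv (hd : 0 < d) (hc : 0 < c) (hx : 0 < x)
    (hy : 0 < 1 - c * x) :
    Real.sign (-(c * (r - 1) * x ^ (1 / r - 2) * (1 - c * x) ^ (1 / r - 2) *
          ((c * x ^ (1 / r) + (1 - c * x) ^ (1 / r)) / d) ^ r) /
        (r * (c * x ^ (1 / r) + (1 - c * x) ^ (1 / r)) ^ 2)) = -Real.sign (r / (r - 1)) := by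
  have hu := mul_rpow_add_rpow_one_sub_mul_pos (r := r) hc.le hx hy
  have hK : 0 < c * x ^ (1 / r - 2) * (1 - c * x) ^ (1 / r - 2) *
      ((c * x ^ (1 / r) + (1 - c * x) ^ (1 / r)) / d) ^ r /
      (c * x ^ (1 / r) + (1 - c * x) ^ (1 / r)) ^ 2 := by
    have := Real.rpow_pos_of_pos hy (1 / r - 2)
    positivity
  rw [← Real.sign_inv, inv_div, ← Real.sign_neg, ← Real.sign_mul_of_pos hK]
  congr 1
  field_simp

end PowerMean

theorem stmt_10_general (n : ℕ) (r : ℝ) (hr0 : r ≠ 0) :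
    ∀ x ∈ Set.Ioo (0 : ℝ) (1 / (n - 1)),
      (let p : ℝ → ℝ := fun x =>
        (((n - 1) * x ^ (1 / r) + (1 - (n - 1) * x) ^ (1 / r)) / n) ^ r;
       let p' : ℝ → ℝ := fun x =>
        (n - 1) * (x ^ (1 / r - 1) - (1 - (n - 1) * x) ^ (1 / r - 1)) /
          ((n - 1) * x ^ (1 / r) + (1 - (n - 1) * x) ^ (1 / r)) * p x;
       let p'' : ℝ → ℝ := fun x =>
        -((n - 1) * (r - 1) * x ^ (1 / r - 2) * (1 - (n - 1) * x) ^ (1 / r - 2) * p x) /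
          (r * ((n - 1) * x ^ (1 / r) + (1 - (n - 1) * x) ^ (1 / r)) ^ 2);
       HasDerivAt p (p' x) x ∧
       HasDerivAt p' (p'' x) x ∧
       Real.sign (p'' x) = -Real.sign (r / (r - 1))) := by
  rintro x ⟨hx, hxc⟩
  have hc : (0 : ℝ) < n - 1 := one_div_pos.mp (hx.trans hxc)
  have hy : 0 < 1 - (n - 1) * x := by
    have := (lt_div_iff₀ hc).mp hxc
    linarith
  have hn : (0 : ℝ) < n := by linarith
  exact ⟨hasDerivAt_powerMean hr0 hn.ne' hc.le hx hy,
    hasDerivAt_powerMean_deriv hr0 hn.ne' hc.le hx hy,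
    sign_powerMean_secondDeriv hn hc hx hy⟩

theorem stmt_10 (n : ℕ) (hn : 2 < n) (r : ℝ) (hr0 : r ≠ 0) (hr1 : r ≠ 1) :
    ∀ x ∈ Set.Ioo (0 : ℝ) (1 / (n - 1)),
      (let p : ℝ → ℝ := fun x =>
        (((n - 1) * x ^ (1 / r) + (1 - (n - 1) * x) ^ (1 / r)) / n) ^ r;
       let p' : ℝ → ℝ := fun x =>
        (n - 1) * (x ^ (1 / r - 1) - (1 - (n - 1) * x) ^ (1 / r - 1)) /
          ((n - 1) * x ^ (1 / r) + (1 - (n - 1) * x) ^ (1 / r)) * p x;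
       let p'' : ℝ → ℝ := fun x =>
        -((n - 1) * (r - 1) * x ^ (1 / r - 2) * (1 - (n - 1) * x) ^ (1 / r - 2) * p x) /
          (r * ((n - 1) * x ^ (1 / r) + (1 - (n - 1) * x) ^ (1 / r)) ^ 2);
       HasDerivAt p (p' x) x ∧
       HasDerivAt p' (p'' x) x ∧
       Real.sign (p'' x) = -Real.sign (r / (r - 1))) :=
  stmt_10_general n r hr0
end

section
/- For 1/2 < α < 1 and s > 0, the function h(s) = s^{1-2α} + 2α s^{1-α} - 2α s^{-α} - s^{1-α} + s^{-α} - 1 is increasing on (0, ∞); since h(1) = 0, h(s) < 0 for 0 < s < 1 and h(s) > 0 for s > 1. -/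
/-!
The derivative factors as `h'(s) = (2α - 1) s^(-α-1) ((1 - α) s + α - s^(1-α))`, and the last
factor is positive for `s ≠ 1` by the strict Bernoulli inequality `s^(1-α) < 1 + (1 - α)(s - 1)`.
So `h` is strictly increasing on `(0, ∞)`, and its sign is that of `s - 1` because `h 1 = 0`.
-/

open Real Set

lemma rpow_lt_mul_add_one_sub {x p : ℝ} (hx : 0 < x) (hx1 : x ≠ 1) (hp0 : 0 < p) (hp1 : p < 1) :
    x ^ p < p * x + (1 - p) := by
  have := rpow_one_add_lt_one_add_mul_self (s := x - 1) (by linarith) (sub_ne_zero.2 hx1) hp0 hp1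
  rw [add_sub_cancel] at this
  linarith

lemma strictMonoOn_Ioi_of_hasDerivAt_pos_of_ne {f f' : ℝ → ℝ} {a c : ℝ} (hac : a < c)
    (hf : ∀ x ∈ Ioi a, HasDerivAt f (f' x) x) (hf' : ∀ x ∈ Ioi a, x ≠ c → 0 < f' x) :
    StrictMonoOn f (Ioi a) := by
  have hcont : ContinuousOn f (Ioi a) := fun x hx => (hf x hx).continuousAt.continuousWithinAt
  have hleft : StrictMonoOn f (Ioc a c) :=
    strictMonoOn_of_hasDerivWithinAt_pos (convex_Ioc a c)
      (hcont.mono Ioc_subset_Ioi_self)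
      (fun x hx => by
        rw [interior_Ioc] at hx ⊢
        exact (hf x hx.1).hasDerivWithinAt)
      (fun x hx => by
        rw [interior_Ioc] at hx
        exact hf' x hx.1 hx.2.ne)
  have hright : StrictMonoOn f (Ici c) :=
    strictMonoOn_of_hasDerivWithinAt_pos (convex_Ici c)
      (hcont.mono fun x hx => hac.trans_le hx)
      (fun x hx => by
        rw [interior_Ici] at hx ⊢
        exact (hf x (hac.trans hx)).hasDerivWithinAt)
      (fun x hx => by
        rw [interior_Ici] at hx
        exact hf' x (hac.trans hx) hx.ne')
  rw [← Ioc_union_Ici_eq_Ioi hac]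
  exact hleft.union hright (isGreatest_Ioc hac) isLeast_Ici

noncomputable def hFun (α s : ℝ) : ℝ :=
  s ^ (1 - 2 * α) + 2 * α * s ^ (1 - α) - 2 * α * s ^ (-α) - s ^ (1 - α) + s ^ (-α) - 1

lemma hasDerivAt_hFun (α : ℝ) {x : ℝ} (hx : 0 < x) :
    HasDerivAt (hFun α)
      ((2 * α - 1) * x ^ (-α - 1) * ((1 - α) * x + α - x ^ (1 - α))) x := by
  have d₁ := hasDerivAt_rpow_const (p := 1 - 2 * α) (Or.inl hx.ne')
  have d₂ := hasDerivAt_rpow_const (p := 1 - α) (Or.inl hx.ne')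
  have d₃ := hasDerivAt_rpow_const (p := -α) (Or.inl hx.ne')
  unfold hFun
  refine ((((d₁.add (d₂.const_mul (2 * α))).sub (d₃.const_mul (2 * α))).sub d₂).add d₃).sub
    (hasDerivAt_const x 1) |>.congr_deriv ?_
  have e₁ : x ^ (1 - 2 * α - 1) = x ^ (-α - 1) * x ^ (1 - α) := by
    rw [← rpow_add hx]
    ring_nf
  have e₂ : x ^ (1 - α - 1) = x ^ (-α - 1) * x := by
    rw [show 1 - α - 1 = -α - 1 + 1 by ring, rpow_add hx, rpow_one]
  rw [e₁, e₂]
  ring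

lemma hFun_strictMonoOn {α : ℝ} (hα1 : 1 / 2 < α) (hα2 : α < 1) :
    StrictMonoOn (hFun α) (Ioi 0) :=
  strictMonoOn_Ioi_of_hasDerivAt_pos_of_ne one_pos (fun x hx => hasDerivAt_hFun α hx)
    fun x hx hx1 => by
      have hx : 0 < x := hx
      have hbernoulli := rpow_lt_mul_add_one_sub hx hx1 (p := 1 - α) (by linarith) (by linarith)
      have hfactor : 0 < (1 - α) * x + α - x ^ (1 - α) := by linarith
      have hcoeff : 0 < 2 * α - 1 := by linarith
      positivity

lemma hFun_one (α : ℝ) : hFun α 1 = 0 := by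
  simp [hFun]

theorem stmt_11 (α : ℝ) (hα1 : 1 / 2 < α) (hα2 : α < 1) :
    (let h : ℝ → ℝ := fun s =>
      s ^ (1 - 2 * α) + 2 * α * s ^ (1 - α) - 2 * α * s ^ (-α) -
        s ^ (1 - α) + s ^ (-α) - 1;
     StrictMonoOn h (Set.Ioi (0 : ℝ)) ∧ h 1 = 0 ∧
     (∀ s : ℝ, 0 < s → s < 1 → h s < 0) ∧
     (∀ s : ℝ, 1 < s → 0 < h s)) := by
  have hmono := hFun_strictMonoOn hα1 hα2
  refine ⟨hmono, hFun_one α, fun s hs0 hs1 => ?_, fun s hs1 => ?_⟩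
  · have := hmono hs0 (mem_Ioi.2 one_pos) hs1
    rwa [hFun_one] at this
  · have := hmono (mem_Ioi.2 one_pos) (mem_Ioi.2 (one_pos.trans hs1)) hs1
    rwa [hFun_one] at this
end

section
/- Let n ≥ 2 and α > 1. If x₁ = 0 and x₂,...,xₙ are positive reals, then n^{1/α - 1} ≤ A_n/P_α ≤ (n/(n-1))^{1/α - 1}. -/
/-!
Write `S = ∑ xᵢ` and `Q = ∑ xᵢ^α`. Then `A / P = n^(1/α - 1) · S / Q^(1/α)`, so both bounds are
comparisons between the `ℓ¹` and `ℓ^α` norms of `x`. The lower bound is `‖x‖_α ≤ ‖x‖₁`; for the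
upper bound, `x₁ = 0` lets both sums run over only `n - 1` indices, and the power mean inequality
on those gives `S ≤ (n - 1)^(1 - 1/α) · Q^(1/α)`.
-/

open Finset Real

namespace Real

variable {ι : Type*} {s : Finset ι} {f : ι → ℝ} {p : ℝ}

theorem sum_rpow_le_rpow_sum (hp : 1 ≤ p) (hf : ∀ i ∈ s, 0 ≤ f i) :
    ∑ i ∈ s, f i ^ p ≤ (∑ i ∈ s, f i) ^ p := by
  have hp' : 1 + (p - 1) ≠ 0 := by linarith
  calc ∑ i ∈ s, f i ^ p = ∑ i ∈ s, f i * f i ^ (p - 1) :=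
        sum_congr rfl fun i hi => by rw [← rpow_one_add' (hf i hi) hp', add_sub_cancel]
    _ ≤ ∑ i ∈ s, f i * (∑ j ∈ s, f j) ^ (p - 1) := sum_le_sum fun i hi =>
        mul_le_mul_of_nonneg_left
          (rpow_le_rpow (hf i hi) (single_le_sum hf hi) (by linarith)) (hf i hi)
    _ = (∑ i ∈ s, f i) ^ p := by
        rw [← sum_mul, ← rpow_one_add' (sum_nonneg hf) hp', add_sub_cancel]

theorem sum_rpow_rpow_inv_le_sum (hp : 1 ≤ p) (hf : ∀ i ∈ s, 0 ≤ f i) :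
    (∑ i ∈ s, f i ^ p) ^ p⁻¹ ≤ ∑ i ∈ s, f i :=
  (rpow_inv_le_iff_of_pos (sum_nonneg fun i hi => rpow_nonneg (hf i hi) p) (sum_nonneg hf)
    (by linarith)).2 (sum_rpow_le_rpow_sum hp hf)

theorem sum_le_card_rpow_mul_sum_rpow_rpow_inv (hp : 1 ≤ p) (hf : ∀ i ∈ s, 0 ≤ f i) :
    ∑ i ∈ s, f i ≤ (#s : ℝ) ^ (1 - p⁻¹) * (∑ i ∈ s, f i ^ p) ^ p⁻¹ := by
  have hp0 : 0 < p := by linarith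
  have hQ : 0 ≤ ∑ i ∈ s, f i ^ p := sum_nonneg fun i hi => rpow_nonneg (hf i hi) p
  have hexp : (p - 1) * p⁻¹ = 1 - p⁻¹ := by field_simp
  rw [← hexp, rpow_mul (Nat.cast_nonneg _), ← mul_rpow (by positivity) hQ,
    le_rpow_inv_iff_of_pos (sum_nonneg hf) (by positivity) hp0]
  exact rpow_sum_le_const_mul_sum_rpow_of_nonneg s hp hf

end Real

theorem div_div_rpow_inv_eq {n S Q p : ℝ} (hn : 0 < n) (hQ : 0 ≤ Q) :
    S / n / (Q / n) ^ p⁻¹ = n ^ (p⁻¹ - 1) * (S / Q ^ p⁻¹) := by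
  rw [div_rpow hQ hn.le, rpow_sub_one hn.ne']
  field_simp

theorem stmt_15 (n : ℕ) (hn : 2 ≤ n) (α : ℝ) (hα : 1 < α)
    (x : Fin n → ℝ) (h0 : x ⟨0, by omega⟩ = 0) (hpos : ∀ i : Fin n, (i : ℕ) ≠ 0 → 0 < x i) :
    (let A := (∑ i, x i) / n
     let P := ((∑ i, x i ^ α) / n) ^ (1 / α)
     (n : ℝ) ^ (1 / α - 1) ≤ A / P ∧ A / P ≤ ((n : ℝ) / (n - 1)) ^ (1 / α - 1)) := by
  intro A P
  set S := ∑ i, x i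
  set Q := ∑ i, x i ^ α
  have hx : ∀ i, 0 ≤ x i := fun i => by
    by_cases hi : (i : ℕ) = 0
    · rw [show i = ⟨0, by omega⟩ from Fin.ext hi, h0]
    · exact (hpos i hi).le
  have hn1 : (1 : ℝ) < n := by exact_mod_cast hn
  have hQ : 0 < Q := sum_pos' (fun i _ => rpow_nonneg (hx i) α)
    ⟨⟨1, by omega⟩, mem_univ _, rpow_pos_of_pos (hpos _ one_ne_zero) α⟩
  have hN : 0 < Q ^ α⁻¹ := by positivity
  have hAP : A / P = n ^ (α⁻¹ - 1) * (S / Q ^ α⁻¹) := by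
    simp only [A, P, one_div]
    exact div_div_rpow_inv_eq (by positivity) hQ.le
  have hlower : Q ^ α⁻¹ ≤ S := sum_rpow_rpow_inv_le_sum hα.le fun i _ => hx i
  have hupper : S ≤ ((n : ℝ) - 1) ^ (1 - α⁻¹) * Q ^ α⁻¹ := by
    have h := sum_le_card_rpow_mul_sum_rpow_rpow_inv (s := univ.erase ⟨0, by omega⟩) hα.le
      fun i _ => hx i
    rwa [sum_erase _ h0, sum_erase _ (by rw [h0, zero_rpow (by positivity)]),
      card_erase_of_mem (mem_univ _), card_fin, Nat.cast_pred (by omega)] at h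
  rw [hAP, one_div]
  constructor
  · exact le_mul_of_one_le_right (by positivity) ((one_le_div hN).2 hlower)
  · rw [div_rpow (by positivity) (by linarith), div_eq_mul_inv _ (((n : ℝ) - 1) ^ _),
      ← rpow_neg (by linarith), neg_sub]
    exact mul_le_mul_of_nonneg_left ((div_le_iff₀ hN).2 hupper) (by positivity)
end

section
/- Let n ≥ 2, α real, α ≠ 0, α < 1, and let x₁,...,xₙ be positive reals, not all equal, with geometric mean G_n. Define h(x₁,...,xₙ) = (A_n - G_n)/(P_α - G_n). Then h(x₁,...,xₙ, G_n) ≥ h(x₁,...,xₙ), i.e., appending the geometric mean as an (n+1)-st variable does not decrease the ratio. -/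
/-!
Appending `G` keeps the geometric mean, multiplies `A - G` by `t = n / (n + 1)`, and replaces `P`
by the two-point power mean `M = (t P^α + (1 - t) G^α)^(1/α)`. For `α < 1`, `α ≠ 0` the map
`s ↦ s^(1/α)` is convex on `(0, ∞)`, so Jensen gives `M ≤ t P + (1 - t) G`, i.e.
`M - G ≤ t (P - G)`; and `M - G` has the sign of `P - G` (both are ruled by the sign of `α`, as
`G^α ≤ P^α` by AM-GM for the `x i ^ α`). So the denominator shrinks at least by the factor `t`
that the numerator shrinks by.
-/

open Real Set Finset

theorem convexOn_rpow_of_neg {p : ℝ} (hp : p < 0) : ConvexOn ℝ (Ioi 0) fun x : ℝ ↦ x ^ p := by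
  -- `x ^ p = exp (p log x)`: `p log` is convex for `p < 0`, and `exp` is convex and monotone.
  refine ⟨convex_Ioi 0, fun x hx y hy a b ha hb hab ↦ ?_⟩
  have hxy : 0 < a • x + b • y := (convex_Ioi 0) hx hy ha hb hab
  simp only [smul_eq_mul] at hxy ⊢
  rw [rpow_def_of_pos hxy, rpow_def_of_pos hx, rpow_def_of_pos hy]
  calc exp (log (a * x + b * y) * p) ≤ exp (a * (log x * p) + b * (log y * p)) := by
        gcongr
        have := strictConcaveOn_log_Ioi.concaveOn.2 hx hy ha hb hab
        simp only [smul_eq_mul] at this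
        nlinarith
    _ ≤ a * exp (log x * p) + b * exp (log y * p) := by
        simpa only [smul_eq_mul] using convexOn_exp.2 (mem_univ _) (mem_univ _) ha hb hab

theorem div_le_mul_div_of_le_mul {a d e t : ℝ} (ha : 0 ≤ a) (ht : 0 < t) (h : e ≤ t * d)
    (hsign : 0 < e ∨ d < 0) : a / d ≤ t * a / e := by
  rw [← mul_div_mul_left a d ht.ne']
  rcases hsign with he | hd
  · exact div_le_div_of_nonneg_left (mul_nonneg ht.le ha) he h
  · have htd : t * d < 0 := mul_neg_of_pos_of_neg ht hd
    simp only [div_eq_mul_inv]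
    exact mul_le_mul_of_nonneg_left ((inv_le_inv_of_neg htd (h.trans_lt htd)).2 h)
      (mul_nonneg ht.le ha)

theorem rpow_mean2_le_arith_mean2 {α w₁ w₂ u v : ℝ} (hα0 : α ≠ 0) (hα1 : α < 1)
    (hw₁ : 0 ≤ w₁) (hw₂ : 0 ≤ w₂) (hw : w₁ + w₂ = 1) (hu : 0 < u) (hv : 0 < v) :
    (w₁ * u ^ α + w₂ * v ^ α) ^ (1 / α) ≤ w₁ * u + w₂ * v := by
  have hconv : ConvexOn ℝ (Ioi 0) fun x : ℝ ↦ x ^ (1 / α) := by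
    rcases hα0.lt_or_gt with hneg | hpos
    · exact convexOn_rpow_of_neg (one_div_neg.2 hneg)
    · exact (convexOn_rpow ((one_le_div hpos).2 hα1.le)).subset Ioi_subset_Ici_self (convex_Ioi 0)
  have := hconv.2 (rpow_pos_of_pos hu α) (rpow_pos_of_pos hv α) hw₁ hw₂ hw
  simpa only [smul_eq_mul, one_div, rpow_rpow_inv hu.le hα0, rpow_rpow_inv hv.le hα0] using this

theorem geom_mean_le_arith_mean_univ {ι : Type*} [Fintype ι] [Nonempty ι] (z : ι → ℝ)
    (hz : ∀ i, 0 ≤ z i) :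
    (∏ i, z i) ^ ((1 : ℝ) / Fintype.card ι) ≤ (∑ i, z i) / Fintype.card ι := by
  simpa [one_div] using geom_mean_le_arith_mean univ (fun _ ↦ 1) z (fun _ _ ↦ zero_le_one)
    (by simpa using Fintype.card_pos) (fun i _ ↦ hz i)

theorem geom_mean_rpow_le_arith_mean_rpow {ι : Type*} [Fintype ι] [Nonempty ι] (z : ι → ℝ)
    (hz : ∀ i, 0 < z i) (α : ℝ) :
    ((∏ i, z i) ^ ((1 : ℝ) / Fintype.card ι)) ^ α ≤ (∑ i, z i ^ α) / Fintype.card ι := by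
  have hprod : 0 ≤ ∏ i, z i := prod_nonneg fun i _ ↦ (hz i).le
  rw [← rpow_mul hprod, mul_comm, rpow_mul hprod, ← finsetProd_rpow _ _ fun i _ ↦ (hz i).le]
  exact geom_mean_le_arith_mean_univ _ fun i ↦ (rpow_pos_of_pos (hz i) α).le

theorem div_sub_le_mul_div_rpow_mean2_sub {α t u v a : ℝ} (hα0 : α ≠ 0) (hα1 : α < 1)
    (ht0 : 0 < t) (ht1 : t ≤ 1) (hu : 0 < u) (hv : 0 < v) (hvu : v ^ α ≤ u ^ α) (ha : 0 ≤ a) :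
    a / (u - v) ≤ t * a / ((t * u ^ α + (1 - t) * v ^ α) ^ (1 / α) - v) := by
  set M := (t * u ^ α + (1 - t) * v ^ α) ^ (1 / α) with hM_def
  have hMv : M - v ≤ t * (u - v) := by
    have := rpow_mean2_le_arith_mean2 hα0 hα1 ht0.le (sub_nonneg.2 ht1) (by ring) hu hv
    linarith
  rcases eq_or_ne u v with rfl | huv
  · have hM : M = u := by
      rw [hM_def, ← add_mul, add_sub_cancel, one_mul, one_div, rpow_rpow_inv hu.le hα0]
    simp [hM]
  refine div_le_mul_div_of_le_mul ha ht0 hMv ?_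
  rcases hα0.lt_or_gt with hneg | hpos
  · exact .inr <| sub_neg.2 <| ((rpow_le_rpow_iff_of_neg hv hu hneg).1 hvu).lt_of_ne huv
  · have hvu' : v ^ α < u ^ α :=
      rpow_lt_rpow hv.le (((rpow_le_rpow_iff hv.le hu.le hpos).1 hvu).lt_of_ne' huv) hpos
    have hbase : v ^ α < t * u ^ α + (1 - t) * v ^ α := by nlinarith
    refine .inl <| sub_pos.2 ?_
    calc v = (v ^ α) ^ (1 / α) := by rw [one_div, rpow_rpow_inv hv.le hα0]
      _ < M := rpow_lt_rpow (by positivity) hbase (by positivity)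

theorem stmt_17_general (n : ℕ) (hn : 2 ≤ n) (α : ℝ) (hα0 : α ≠ 0) (hα1 : α < 1)
    (x : Fin n → ℝ) (hpos : ∀ i, 0 < x i) :
    (let A := (∑ i, x i) / n
     let G := (∏ i, x i) ^ ((1 : ℝ) / n)
     let P := ((∑ i, x i ^ α) / n) ^ (1 / α)
     ((n * A + G) / (n + 1) - G) / (((n * P ^ α + G ^ α) / (n + 1)) ^ (1 / α) - G) ≥
       (A - G) / (P - G)) := by
  intro A G P
  have : Nonempty (Fin n) := ⟨⟨0, by omega⟩⟩
  have hsum : 0 < (∑ i, x i ^ α) / n :=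
    div_pos (sum_pos (fun i _ ↦ rpow_pos_of_pos (hpos i) α) univ_nonempty) (by positivity)
  have hG : 0 < G := rpow_pos_of_pos (prod_pos fun i _ ↦ hpos i) _
  have hP : 0 < P := rpow_pos_of_pos hsum _
  have hAG : G ≤ A := by
    simpa only [Fintype.card_fin] using geom_mean_le_arith_mean_univ x fun i ↦ (hpos i).le
  have hPα : P ^ α = (∑ i, x i ^ α) / n := by
    simp only [P, one_div]
    exact rpow_inv_rpow hsum.le hα0
  have hGP : G ^ α ≤ P ^ α := by
    simpa only [hPα, Fintype.card_fin] using geom_mean_rpow_le_arith_mean_rpow x hpos α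
  have hnum : ((n : ℝ) * A + G) / (n + 1) - G = n / (n + 1) * (A - G) := by
    field_simp; ring
  have hbase : ((n : ℝ) * P ^ α + G ^ α) / (n + 1) =
      n / (n + 1) * P ^ α + (1 - n / (n + 1)) * G ^ α := by
    field_simp; ring
  rw [ge_iff_le, hnum, hbase]
  exact div_sub_le_mul_div_rpow_mean2_sub hα0 hα1 (by positivity)
    (div_le_one_of_le₀ (by linarith) (by positivity)) hP hG hGP (sub_nonneg.2 hAG)

theorem stmt_17 (n : ℕ) (hn : 2 ≤ n) (α : ℝ) (hα0 : α ≠ 0) (hα1 : α < 1)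
    (x : Fin n → ℝ) (hpos : ∀ i, 0 < x i) (hne : ¬ ∀ i j, x i = x j) :
    (let A := (∑ i, x i) / n
     let G := (∏ i, x i) ^ ((1 : ℝ) / n)
     let P := ((∑ i, x i ^ α) / n) ^ (1 / α)
     ((n * A + G) / (n + 1) - G) / (((n * P ^ α + G ^ α) / (n + 1)) ^ (1 / α) - G) ≥
       (A - G) / (P - G)) :=
  stmt_17_general n hn α hα0 hα1 x hpos
end

section
/- For n ≥ 2 let x₁ = ... = x_{n-1} = 1 and xₙ = 1/n. Then for the harmonic, geometric, and arithmetic means of this n-tuple: A_n = 1 - 1/n + 1/n², G_n = n^{-1/n}, H_n = n/(2n-1), and (A_n - G_n)/(H_n - G_n) → 0 as n → ∞. -/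
open Filter Topology

/-!
The tuple has `n - 1` ones and one entry `1/n`, so its sum, product and sum of reciprocals are
`n - 1 + 1/n`, `1/n` and `2n - 1`. Since `A_n → 1`, `G_n → 1` and `H_n → 1/2`, the numerator
`A_n - G_n` tends to `0` while the denominator `H_n - G_n` tends to `-1/2`.
-/

@[to_additive]
theorem Fin.prod_ite_val_lt {M : Type*} [CommMonoid M] (k : ℕ) (a b : M) :
    ∏ i : Fin (k + 1), (if (i : ℕ) < k then b else a) = b ^ k * a := by
  simp [Fin.prod_univ_castSucc]

theorem tendsto_sub_div_sub_of_tendsto {α K : Type*} [Field K] [TopologicalSpace K]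
    [IsTopologicalDivisionRing K] {l : Filter α} {f g h : α → K} {a b : K}
    (hf : Tendsto f l (𝓝 a)) (hg : Tendsto g l (𝓝 a)) (hh : Tendsto h l (𝓝 b)) (hab : b ≠ a) :
    Tendsto (fun x => (f x - g x) / (h x - g x)) l (𝓝 0) := by
  simpa [Pi.div_def] using (hf.sub hg).div (hh.sub hg) (sub_ne_zero.mpr hab)

theorem tendsto_one_sub_inv_add_inv_sq :
    Tendsto (fun n : ℕ => 1 - 1 / (n : ℝ) + 1 / (n : ℝ) ^ 2) atTop (𝓝 1) := by
  have h := tendsto_one_div_atTop_nhds_zero_nat (𝕜 := ℝ)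
  simpa [sq] using (tendsto_const_nhds (x := (1 : ℝ)).sub h).add (h.mul h)

theorem tendsto_div_two_mul_sub_one :
    Tendsto (fun n : ℕ => (n : ℝ) / (2 * n - 1)) atTop (𝓝 (1 / 2)) := by
  have h := tendsto_one_div_atTop_nhds_zero_nat (𝕜 := ℝ)
  have hlim : Tendsto (fun n : ℕ => 1 / (2 - 1 / (n : ℝ))) atTop (𝓝 (1 / 2)) := by
    simpa [Pi.div_def] using (tendsto_const_nhds (x := (1 : ℝ))).div
      (tendsto_const_nhds.sub h) (by norm_num : (2 : ℝ) - 0 ≠ 0)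
  refine hlim.congr' ?_
  filter_upwards [eventually_ge_atTop 1] with n hn
  have : (n : ℝ) ≠ 0 := by positivity
  field_simp

theorem tendsto_rpow_neg_one_div_natCast :
    Tendsto (fun n : ℕ => (n : ℝ) ^ (-(1 : ℝ) / n)) atTop (𝓝 1) :=
  tendsto_rpow_neg_div.comp tendsto_natCast_atTop_atTop

theorem stmt_19 :
    (∀ n : ℕ, 2 ≤ n →
      (let x : Fin n → ℝ := fun i => if (i : ℕ) < n - 1 then 1 else 1 / n
       (∑ i, x i) / n = 1 - 1 / n + 1 / (n : ℝ) ^ 2 ∧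
       (∏ i, x i) ^ ((1 : ℝ) / n) = (n : ℝ) ^ (-(1 : ℝ) / n) ∧
       (n : ℝ) / (∑ i, (x i)⁻¹) = n / (2 * n - 1))) ∧
    Tendsto (fun n : ℕ =>
        ((1 - 1 / (n : ℝ) + 1 / (n : ℝ) ^ 2) - (n : ℝ) ^ (-(1 : ℝ) / n)) /
          ((n : ℝ) / (2 * n - 1) - (n : ℝ) ^ (-(1 : ℝ) / n)))
      atTop (nhds 0) := by
  refine ⟨fun n hn => ?_, tendsto_sub_div_sub_of_tendsto tendsto_one_sub_inv_add_inv_sq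
    tendsto_rpow_neg_one_div_natCast tendsto_div_two_mul_sub_one (by norm_num)⟩
  obtain ⟨k, rfl⟩ : ∃ k, n = k + 1 := ⟨n - 1, by omega⟩
  have hpos : (0 : ℝ) < (k + 1 : ℕ) := by positivity
  simp only [Nat.add_sub_cancel, apply_ite (·⁻¹), inv_one, Fin.sum_ite_val_lt, Fin.prod_ite_val_lt,
    one_pow, one_mul, nsmul_eq_mul, mul_one]
  refine ⟨?_, ?_, ?_⟩
  · push_cast
    field_simp
    ring
  · rw [one_div, Real.inv_rpow hpos.le, ← Real.rpow_neg hpos.le, neg_div, one_div]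
  · rw [one_div, inv_inv]
    push_cast
    congr 1
    ring
end
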